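/- arXiv:1701.04885 — 8 statements merged into one kernel-verified Lean document; each statement's English description precedes it below -/
import Mathlib

section
/- Let (H_k, k) and (H_ℓ, ℓ) be RKHSs on a set X and let (λ_i) be a sequence of distinct points of X. If (λ_i) is interpolating for Mult(H_k, H_ℓ), then the Gram matrix of (λ_i) with respect to k is bounded and the Gram matrix of (λ_i) with respect to ℓ is bounded below. -/
noncomputable section

open scoped InnerProductSpace ComplexOrder

/-- `φ : X → ℂ` is a multiplier from the RKHS on `X` with kernel map `k` to the RKHS with
kernel map `l`, implemented by the bounded operator `T`, i.e. `T* l_x = conj (φ x) • k_x`. -/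
def IsMultiplier {X Hk Hl : Type*}
    [NormedAddCommGroup Hk] [InnerProductSpace ℂ Hk] [CompleteSpace Hk]
    [NormedAddCommGroup Hl] [InnerProductSpace ℂ Hl] [CompleteSpace Hl]
    (k : X → Hk) (l : X → Hl) (φ : X → ℂ) (T : Hk →L[ℂ] Hl) : Prop :=
  ∀ x, ContinuousLinearMap.adjoint T (l x) = (starRingEnd ℂ) (φ x) • k x

/-- The sequence `lam` is an interpolating sequence for `Mult(H_k, H_l)`: every bounded
sequence of targets `α i * ‖l (lam i)‖ / ‖k (lam i)‖` is attained by a multiplier. -/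
def InterpMultPair {X Hk Hl : Type*}
    [NormedAddCommGroup Hk] [InnerProductSpace ℂ Hk] [CompleteSpace Hk]
    [NormedAddCommGroup Hl] [InnerProductSpace ℂ Hl] [CompleteSpace Hl]
    (k : X → Hk) (l : X → Hl) (lam : ℕ → X) : Prop :=
  ∀ α : ℕ → ℂ, (∃ B : ℝ, ∀ i, ‖α i‖ ≤ B) →
    ∃ (φ : X → ℂ) (T : Hk →L[ℂ] Hl), IsMultiplier k l φ T ∧
      ∀ i, φ (lam i) = α i * (‖l (lam i)‖ : ℂ) / (‖k (lam i)‖ : ℂ)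

/-- The Gram matrix of the sequence `lam` with respect to the kernel map `k` is bounded. -/
def GramBdd {X H : Type*} [NormedAddCommGroup H] [InnerProductSpace ℂ H]
    (k : X → H) (lam : ℕ → X) : Prop :=
  ∃ C > (0 : ℝ), ∀ (F : Finset ℕ) (a : ℕ → ℂ),
    ‖∑ i ∈ F, a i • (‖k (lam i)‖⁻¹ • k (lam i))‖ ^ 2 ≤ C * ∑ i ∈ F, ‖a i‖ ^ 2

/-- The Gram matrix of the sequence `lam` with respect to the kernel map `k` is
bounded below. -/
def GramBddBelow {X H : Type*} [NormedAddCommGroup H] [InnerProductSpace ℂ H]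
    (k : X → H) (lam : ℕ → X) : Prop :=
  ∃ c > (0 : ℝ), ∀ (F : Finset ℕ) (a : ℕ → ℂ),
    c * ∑ i ∈ F, ‖a i‖ ^ 2 ≤ ‖∑ i ∈ F, a i • (‖k (lam i)‖⁻¹ • k (lam i))‖ ^ 2

/-!
The adjoints `S = M_φ*` of multipliers map each normalised kernel `ℓ̂ᵢ = ℓ_{λᵢ} / ‖ℓ_{λᵢ}‖` to
a multiple of `k̂ᵢ`, and these operators form a Banach space on which `S ↦ (⟪k̂ᵢ, S ℓ̂ᵢ⟫)ᵢ` is a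
bounded surjection onto `ℓ^∞`. By the open mapping theorem every target `α` in the unit ball
of `ℓ^∞` is realised by some `S ℓ̂ᵢ = αᵢ k̂ᵢ` with `‖S‖ ≤ C`. Given coefficients `aᵢ`, the
parallelogram law yields unimodular `σᵢ` with `‖∑ σᵢ aᵢ ℓ̂ᵢ‖² ≤ ∑ |aᵢ|²`; applying `S` with
`αᵢ = σᵢ⁻¹` gives `‖∑ aᵢ k̂ᵢ‖² ≤ C² ∑ |aᵢ|²`. Dually, `σᵢ` with `‖∑ σᵢ aᵢ k̂ᵢ‖² ≥ ∑ |aᵢ|²`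
and `αᵢ = σᵢ` give `∑ |aᵢ|² ≤ C² ‖∑ aᵢ ℓ̂ᵢ‖²`.
-/

open scoped ENNReal

section Signs

variable {𝕜 E ι : Type*} [RCLike 𝕜] [NormedAddCommGroup E] [InnerProductSpace 𝕜 E]

/-- By the parallelogram law the two values of `r * ‖±w + v‖ ^ 2` average to
`r * (‖w‖ ^ 2 + ‖v‖ ^ 2)`. -/
lemma exists_sign_mul_norm_add_sq_le (r : ℝ) (w v : E) :
    ∃ σ : 𝕜, ‖σ‖ = 1 ∧ r * ‖σ • w + v‖ ^ 2 ≤ r * (‖w‖ ^ 2 + ‖v‖ ^ 2) := by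
  have hpar := parallelogram_law_with_norm 𝕜 w v
  have hneg : ‖(-1 : 𝕜) • w + v‖ = ‖w - v‖ := by
    rw [neg_one_smul, ← norm_neg]
    congr 1
    abel
  by_cases h : r * ‖w + v‖ ^ 2 ≤ r * (‖w‖ ^ 2 + ‖v‖ ^ 2)
  · exact ⟨1, norm_one, by rwa [one_smul]⟩
  · refine ⟨-1, by simp, ?_⟩
    rw [hneg]
    nlinarith [congrArg (r * ·) hpar]

/-- With `r = 1` (resp. `r = -1`) this bounds a sum of vectors with suitable unimodular
coefficients from above (resp. below) by its value for an orthogonal family. -/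
lemma exists_unimodular_mul_norm_sum_sq_le (r : ℝ) (w : ι → E) (s : Finset ι) :
    ∃ σ : ι → 𝕜, (∀ i, ‖σ i‖ = 1) ∧
      r * ‖∑ i ∈ s, σ i • w i‖ ^ 2 ≤ r * ∑ i ∈ s, ‖w i‖ ^ 2 := by
  classical
  induction s using Finset.induction_on with
  | empty => exact ⟨fun _ => 1, fun _ => norm_one, by simp⟩
  | @insert j s hj ih =>
    obtain ⟨σ, hσ, hsum⟩ := ih
    obtain ⟨τ, hτ, hstep⟩ :=
      exists_sign_mul_norm_add_sq_le (𝕜 := 𝕜) r (w j) (∑ i ∈ s, σ i • w i)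
    refine ⟨Function.update σ j τ, fun i => ?_, ?_⟩
    · rcases eq_or_ne i j with rfl | hij
      · simpa using hτ
      · simpa [hij] using hσ i
    · have hrest : ∑ i ∈ s, Function.update σ j τ i • w i = ∑ i ∈ s, σ i • w i :=
        Finset.sum_congr rfl fun i hi => by
          rw [Function.update_of_ne (ne_of_mem_of_not_mem hi hj)]
      rw [Finset.sum_insert hj, Finset.sum_insert hj, hrest, Function.update_self]
      rw [mul_add] at hstep ⊢
      linarith

end Signs

def IsDiagonalInterpolating (𝕜 : Type*) {E F ι : Type*} [RCLike 𝕜] [NormedAddCommGroup E]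
    [NormedSpace 𝕜 E] [NormedAddCommGroup F] [NormedSpace 𝕜 F] (u : ι → F) (v : ι → E) :
    Prop :=
  ∀ α : ι → 𝕜, (∃ B : ℝ, ∀ i, ‖α i‖ ≤ B) → ∃ S : F →L[𝕜] E, ∀ i, S (u i) = α i • v i

section DiagonalInterpolation

variable {𝕜 E F ι : Type*} [RCLike 𝕜] [NormedAddCommGroup E] [InnerProductSpace 𝕜 E]
  [NormedAddCommGroup F] [NormedSpace 𝕜 F] {u : ι → F} {v : ι → E}

variable (𝕜 u v) in
def diagonalOps : Submodule 𝕜 (F →L[𝕜] E) :=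
  ⨅ i, (𝕜 ∙ v i).comap (ContinuousLinearMap.apply 𝕜 E (u i) : (F →L[𝕜] E) →ₗ[𝕜] E)

lemma mem_diagonalOps {S : F →L[𝕜] E} : S ∈ diagonalOps 𝕜 u v ↔ ∀ i, S (u i) ∈ 𝕜 ∙ v i := by
  simp [diagonalOps]

lemma isClosed_diagonalOps : IsClosed (diagonalOps 𝕜 u v : Set (F →L[𝕜] E)) := by
  rw [diagonalOps, Submodule.coe_iInf]
  exact isClosed_iInter fun i => (Submodule.closed_of_finiteDimensional (𝕜 ∙ v i)).preimage
    (ContinuousLinearMap.apply 𝕜 E (u i)).continuous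

variable (𝕜 u v) in
def diagonalCoeffs (hu : ∀ i, ‖u i‖ ≤ 1) (hv : ∀ i, ‖v i‖ ≤ 1) :
    (F →L[𝕜] E) →L[𝕜] lp (fun _ : ι => 𝕜) ∞ :=
  have hle (S : F →L[𝕜] E) (i : ι) : ‖⟪v i, S (u i)⟫_𝕜‖ ≤ ‖S‖ :=
    calc ‖⟪v i, S (u i)⟫_𝕜‖ ≤ ‖v i‖ * (‖S‖ * ‖u i‖) :=
          (norm_inner_le_norm _ _).trans (by gcongr; exact S.le_opNorm _)
      _ ≤ 1 * (‖S‖ * 1) := by gcongr <;> simp [hu, hv]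
      _ = ‖S‖ := by ring
  LinearMap.mkContinuous
    { toFun S := ⟨fun i => ⟪v i, S (u i)⟫_𝕜, memℓp_infty ⟨‖S‖, by
        rintro _ ⟨i, rfl⟩; exact hle S i⟩⟩
      map_add' S T := lp.ext <| funext fun i => inner_add_right _ _ _
      map_smul' c S := lp.ext <| funext fun i => inner_smul_right _ _ _ }
    1 fun S => by simpa using lp.norm_le_of_forall_le (norm_nonneg S) (hle S)

lemma eq_inner_smul_of_mem_span_singleton {v x : E} (hv : ‖v‖ = 1) (hx : x ∈ 𝕜 ∙ v) :
    x = ⟪v, x⟫_𝕜 • v :=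
  ((𝕜 ∙ v).starProjection_eq_self_iff.2 hx).symm.trans
    (Submodule.starProjection_unit_singleton 𝕜 hv x)

/-- The open mapping theorem, applied to the coefficient map on the Banach space
`diagonalOps 𝕜 u v`, makes the interpolating operators uniformly bounded. -/
theorem IsDiagonalInterpolating.exists_opNorm_le [CompleteSpace E]
    (h : IsDiagonalInterpolating 𝕜 u v) (hu : ∀ i, ‖u i‖ ≤ 1) (hv : ∀ i, ‖v i‖ = 1) :
    ∃ C > 0, ∀ α : ι → 𝕜, (∀ i, ‖α i‖ ≤ 1) →
      ∃ S : F →L[𝕜] E, ‖S‖ ≤ C ∧ ∀ i, S (u i) = α i • v i := by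
  have : CompleteSpace (diagonalOps 𝕜 u v) := isClosed_diagonalOps.completeSpace_coe
  let coeffs : diagonalOps 𝕜 u v →L[𝕜] lp (fun _ : ι => 𝕜) ∞ :=
    (diagonalCoeffs 𝕜 u v hu fun i => (hv i).le).comp (diagonalOps 𝕜 u v).subtypeL
  have coeffs_apply (S : diagonalOps 𝕜 u v) (i : ι) : coeffs S i = ⟪v i, S.1 (u i)⟫_𝕜 := rfl
  have coeffs_surjective : Function.Surjective coeffs := by
    intro α
    obtain ⟨S, hS⟩ := h α ⟨‖α‖, lp.norm_apply_le_norm ENNReal.top_ne_zero α⟩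
    refine ⟨⟨S, mem_diagonalOps.2 fun i => hS i ▸ Submodule.smul_mem _ _
      (Submodule.mem_span_singleton_self _)⟩, lp.ext <| funext fun i => ?_⟩
    rw [coeffs_apply, hS, inner_smul_right, inner_self_eq_norm_sq_to_K, hv]
    simp
  obtain ⟨C, hC, hpre⟩ := ContinuousLinearMap.exists_preimage_norm_le (E := diagonalOps 𝕜 u v)
    (F := lp (fun _ : ι => 𝕜) ∞) (σ' := RingHom.id 𝕜) coeffs coeffs_surjective
  refine ⟨C, hC, fun α hα => ?_⟩
  obtain ⟨S, hSα, hSC⟩ := hpre ⟨α, memℓp_infty ⟨1, by rintro _ ⟨i, rfl⟩; exact hα i⟩⟩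
  refine ⟨S, hSC.trans (mul_le_of_le_one_right hC.le
    (lp.norm_le_of_forall_le zero_le_one hα)), fun i => ?_⟩
  rw [eq_inner_smul_of_mem_span_singleton (hv i) (mem_diagonalOps.1 S.2 i), ← coeffs_apply, hSα]

end DiagonalInterpolation

lemma ContinuousLinearMap.norm_apply_sq_le_of_opNorm_le {𝕜 E F : Type*}
    [NontriviallyNormedField 𝕜] [SeminormedAddCommGroup E] [NormedSpace 𝕜 E]
    [SeminormedAddCommGroup F] [NormedSpace 𝕜 F]
    (S : F →L[𝕜] E) {C : ℝ} (hS : ‖S‖ ≤ C) (x : F) :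
    ‖S x‖ ^ 2 ≤ C ^ 2 * ‖x‖ ^ 2 := by
  rw [← mul_pow]
  exact pow_le_pow_left₀ (norm_nonneg _) (S.le_of_opNorm_le hS x) 2

section Gram

variable {𝕜 E F ι : Type*} [RCLike 𝕜] [NormedAddCommGroup E] [InnerProductSpace 𝕜 E]
  [CompleteSpace E] [NormedAddCommGroup F] [InnerProductSpace 𝕜 F] {u : ι → F} {v : ι → E}

theorem IsDiagonalInterpolating.exists_norm_sum_sq_le (h : IsDiagonalInterpolating 𝕜 u v)
    (hu : ∀ i, ‖u i‖ ≤ 1) (hv : ∀ i, ‖v i‖ = 1) :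
    ∃ C > (0 : ℝ), ∀ (s : Finset ι) (a : ι → 𝕜),
      ‖∑ i ∈ s, a i • v i‖ ^ 2 ≤ C * ∑ i ∈ s, ‖a i‖ ^ 2 := by
  obtain ⟨C, hC, hS⟩ := h.exists_opNorm_le hu hv
  refine ⟨C ^ 2, by positivity, fun s a => ?_⟩
  obtain ⟨σ, hσ, hle⟩ := exists_unimodular_mul_norm_sum_sq_le (𝕜 := 𝕜) 1 (fun i => a i • u i) s
  obtain ⟨S, hSC, hSu⟩ := hS (fun i => (σ i)⁻¹) fun i => by simp [hσ]
  have hσ0 (i : ι) : σ i ≠ 0 := norm_ne_zero_iff.1 (by simp [hσ])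
  have hmap : S (∑ i ∈ s, σ i • a i • u i) = ∑ i ∈ s, a i • v i := by
    simp only [map_sum, map_smul, hSu, smul_smul]
    exact Finset.sum_congr rfl fun i _ => by
      rw [mul_right_comm, mul_inv_cancel₀ (hσ0 i), one_mul]
  have horth : ∑ i ∈ s, ‖a i • u i‖ ^ 2 ≤ ∑ i ∈ s, ‖a i‖ ^ 2 := by
    gcongr with i
    rw [norm_smul]
    exact mul_le_of_le_one_right (norm_nonneg _) (hu i)
  calc ‖∑ i ∈ s, a i • v i‖ ^ 2 = ‖S (∑ i ∈ s, σ i • a i • u i)‖ ^ 2 := by rw [hmap]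
    _ ≤ C ^ 2 * ‖∑ i ∈ s, σ i • a i • u i‖ ^ 2 := S.norm_apply_sq_le_of_opNorm_le hSC _
    _ ≤ C ^ 2 * ∑ i ∈ s, ‖a i‖ ^ 2 := by gcongr; linarith

theorem IsDiagonalInterpolating.exists_le_norm_sum_sq (h : IsDiagonalInterpolating 𝕜 u v)
    (hu : ∀ i, ‖u i‖ ≤ 1) (hv : ∀ i, ‖v i‖ = 1) :
    ∃ c > (0 : ℝ), ∀ (s : Finset ι) (a : ι → 𝕜),
      c * ∑ i ∈ s, ‖a i‖ ^ 2 ≤ ‖∑ i ∈ s, a i • u i‖ ^ 2 := by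
  obtain ⟨C, hC, hS⟩ := h.exists_opNorm_le hu hv
  refine ⟨(C ^ 2)⁻¹, by positivity, fun s a => ?_⟩
  obtain ⟨σ, hσ, hge⟩ := exists_unimodular_mul_norm_sum_sq_le (𝕜 := 𝕜) (-1) (fun i => a i • v i) s
  obtain ⟨S, hSC, hSu⟩ := hS σ fun i => (hσ i).le
  have hmap : S (∑ i ∈ s, a i • u i) = ∑ i ∈ s, σ i • a i • v i := by
    simp only [map_sum, map_smul, hSu, smul_smul, mul_comm]
  rw [inv_mul_le_iff₀ (by positivity)]
  calc ∑ i ∈ s, ‖a i‖ ^ 2 ≤ ‖∑ i ∈ s, σ i • a i • v i‖ ^ 2 := by simpa [norm_smul, hv] using hge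
    _ = ‖S (∑ i ∈ s, a i • u i)‖ ^ 2 := by rw [hmap]
    _ ≤ C ^ 2 * ‖∑ i ∈ s, a i • u i‖ ^ 2 := S.norm_apply_sq_le_of_opNorm_le hSC _

end Gram

lemma InterpMultPair.isDiagonalInterpolating {X Hk Hl : Type*}
    [NormedAddCommGroup Hk] [InnerProductSpace ℂ Hk] [CompleteSpace Hk]
    [NormedAddCommGroup Hl] [InnerProductSpace ℂ Hl] [CompleteSpace Hl]
    {k : X → Hk} {l : X → Hl} {lam : ℕ → X} (h : InterpMultPair k l lam)
    (hl : ∀ i, l (lam i) ≠ 0) :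
    IsDiagonalInterpolating ℂ (fun i => ‖l (lam i)‖⁻¹ • l (lam i))
      (fun i => ‖k (lam i)‖⁻¹ • k (lam i)) := by
  rintro β ⟨B, hB⟩
  obtain ⟨φ, T, hT, hφ⟩ := h (fun i => starRingEnd ℂ (β i)) ⟨B, by simpa using hB⟩
  refine ⟨ContinuousLinearMap.adjoint T, fun i => ?_⟩
  dsimp only
  have hl' : (‖l (lam i)‖ : ℂ) ≠ 0 := by exact_mod_cast norm_ne_zero_iff.2 (hl i)
  rw [ContinuousLinearMap.map_smul_of_tower, hT, hφ, ← Complex.coe_smul, ← Complex.coe_smul,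
    smul_smul, smul_smul]
  congr 1
  simp only [map_div₀, map_mul, Complex.conj_conj, Complex.conj_ofReal, Complex.ofReal_inv]
  field_simp

theorem statement5_general {X Hk Hl : Type*}
    [NormedAddCommGroup Hk] [InnerProductSpace ℂ Hk] [CompleteSpace Hk]
    [NormedAddCommGroup Hl] [InnerProductSpace ℂ Hl] [CompleteSpace Hl]
    (k : X → Hk) (hk : ∀ x, k x ≠ 0)
    (l : X → Hl) (hl : ∀ x, l x ≠ 0)
    (lam : ℕ → X)
    (hint : InterpMultPair k l lam) :
    GramBdd k lam ∧ GramBddBelow l lam := by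
  have hunit_k (i : ℕ) : ‖‖k (lam i)‖⁻¹ • k (lam i)‖ = 1 := norm_smul_inv_norm (hk _)
  have hunit_l (i : ℕ) : ‖‖l (lam i)‖⁻¹ • l (lam i)‖ ≤ 1 := (norm_smul_inv_norm (hl _)).le
  have hdiag := hint.isDiagonalInterpolating fun i => hl _
  exact ⟨hdiag.exists_norm_sum_sq_le hunit_l hunit_k, hdiag.exists_le_norm_sum_sq hunit_l hunit_k⟩

/-- **Proposition 4.1 (i)**: if a sequence is interpolating for `Mult(H_k, H_ℓ)`, then the
Gram matrix with respect to `k` is bounded and the Gram matrix with respect to `ℓ` is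
bounded below. -/
theorem statement5 {X Hk Hl : Type*}
    [NormedAddCommGroup Hk] [InnerProductSpace ℂ Hk] [CompleteSpace Hk]
    [NormedAddCommGroup Hl] [InnerProductSpace ℂ Hl] [CompleteSpace Hl]
    (k : X → Hk) (hk : ∀ x, k x ≠ 0)
    (hdense_k : Dense ((Submodule.span ℂ (Set.range k) : Submodule ℂ Hk) : Set Hk))
    (l : X → Hl) (hl : ∀ x, l x ≠ 0)
    (hdense_l : Dense ((Submodule.span ℂ (Set.range l) : Submodule ℂ Hl) : Set Hl))
    (lam : ℕ → X) (hinj : Function.Injective lam)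
    (hint : InterpMultPair k l lam) :
    GramBdd k lam ∧ GramBddBelow l lam :=
  statement5_general k hk l hl lam hint
end
end

section
/- Let (H_k, k) and (H_ℓ, ℓ) be RKHSs on a set X such that the pair (k, ℓ) has the Pick property, and let (λ_i) be a sequence of distinct points of X. If the Gram matrix of (λ_i) with respect to k is bounded and the Gram matrix of (λ_i) with respect to ℓ is bounded below, then (λ_i) is interpolating for Mult(H_k, H_ℓ). -/
noncomputable section

open scoped InnerProductSpace ComplexOrder

/-- The pair of kernels `(k, l)` has the Pick property: every finite positivity condition
guarantees a norm-one multiplier solving the corresponding interpolation problem. -/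
def PickPair {X Hk Hl : Type*}
    [NormedAddCommGroup Hk] [InnerProductSpace ℂ Hk] [CompleteSpace Hk]
    [NormedAddCommGroup Hl] [InnerProductSpace ℂ Hl] [CompleteSpace Hl]
    (k : X → Hk) (l : X → Hl) : Prop :=
  ∀ (n : ℕ) (p : Fin n → X), Function.Injective p → ∀ w : Fin n → ℂ,
    (∀ a : Fin n → ℂ,
      0 ≤ ∑ i, ∑ j, a i * (starRingEnd ℂ) (a j) *
        (⟪l (p j), l (p i)⟫_ℂ - w i * (starRingEnd ℂ) (w j) * ⟪k (p j), k (p i)⟫_ℂ)) →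
    ∃ (φ : X → ℂ) (T : Hk →L[ℂ] Hl), IsMultiplier k l φ T ∧ ‖T‖ ≤ 1 ∧ ∀ i, φ (p i) = w i

/-!
Rescale the targets to `w i = ε * α i * ‖ℓ (λ i)‖ / ‖k (λ i)‖` with `C * ε ^ 2 * sup ‖α i‖ ^ 2 ≤ c`,
where `C` bounds the Gram matrix of `k` and `c` bounds that of `ℓ` from below. The two Gram bounds
then give `‖∑ a i • w i • k (λ i)‖ ≤ ‖∑ a i • ℓ (λ i)‖` for every finite family, which is
positivity of the Pick matrix, so the Pick property interpolates every finite section of `w` by a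
contractive multiplier. A cluster point of these multipliers in the weak operator topology, taken
along an ultrafilter, interpolates all of `w`; dividing it by `ε` solves the original problem.
-/

open Filter Topology ComplexConjugate

lemma Ultrafilter.exists_tendsto_of_norm_le {ι E : Type*} [NormedAddCommGroup E] [ProperSpace E]
    (U : Ultrafilter ι) {f : ι → E} {M : ℝ} (hf : ∀ i, ‖f i‖ ≤ M) :
    ∃ z, Tendsto f U (𝓝 z) := by
  obtain ⟨z, -, hz⟩ := (isCompact_closedBall (0 : E) M).ultrafilter_le_nhds (U.map f)
    (le_principal_iff.mpr (Ultrafilter.mem_map.mpr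
      (univ_mem' fun i => mem_closedBall_zero_iff.mpr (hf i))))
  exact ⟨z, hz⟩

theorem ContinuousLinearMap.exists_tendsto_inner_of_norm_le {𝕜 E F ι : Type*} [RCLike 𝕜]
    [NormedAddCommGroup E] [InnerProductSpace 𝕜 E]
    [NormedAddCommGroup F] [InnerProductSpace 𝕜 F] [CompleteSpace F]
    (U : Ultrafilter ι) (T : ι → E →L[𝕜] F) {M : ℝ} (hT : ∀ i, ‖T i‖ ≤ M) :
    ∃ S : E →L[𝕜] F, ∀ u v, Tendsto (fun i => ⟪T i u, v⟫_𝕜) U (𝓝 ⟪S u, v⟫_𝕜) := by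
  have hbound : ∀ i u v, ‖⟪T i u, v⟫_𝕜‖ ≤ M * ‖u‖ * ‖v‖ := fun i u v =>
    (norm_inner_le_norm _ _).trans
      (mul_le_mul_of_nonneg_right ((T i).le_of_opNorm_le (hT i) u) (norm_nonneg v))
  choose L hL using fun u v => U.exists_tendsto_of_norm_le (hbound · u v)
  have lim_eq {u v z} (h : Tendsto (fun i => ⟪T i u, v⟫_𝕜) U (𝓝 z)) : L u v = z :=
    tendsto_nhds_unique (hL u v) h
  let B : E →L⋆[𝕜] F →L[𝕜] 𝕜 := LinearMap.mkContinuous₂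
    (LinearMap.mk₂'ₛₗ (starRingEnd 𝕜) (RingHom.id 𝕜) L
      (fun u₁ u₂ v => lim_eq (by simpa [inner_add_left] using (hL u₁ v).add (hL u₂ v)))
      (fun c u v => lim_eq (by simpa [inner_smul_left] using (hL u v).const_mul (conj c)))
      (fun u v₁ v₂ => lim_eq (by simpa [inner_add_right] using (hL u v₁).add (hL u v₂)))
      (fun c u v => lim_eq (by simpa [inner_smul_right] using (hL u v).const_mul c)))
    M fun u v => le_of_tendsto (hL u v).norm (Eventually.of_forall (hbound · u v))
  refine ⟨(InnerProductSpace.toDual 𝕜 F).symm.toContinuousLinearEquiv.toContinuousLinearMap.comp B,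
    fun u v => ?_⟩
  simpa [B] using hL u v

section Multiplier

variable {X Hk Hl : Type*}
    [NormedAddCommGroup Hk] [InnerProductSpace ℂ Hk] [CompleteSpace Hk]
    [NormedAddCommGroup Hl] [InnerProductSpace ℂ Hl] [CompleteSpace Hl]
    {k : X → Hk} {l : X → Hl} {φ : X → ℂ} {T : Hk →L[ℂ] Hl}

namespace IsMultiplier

lemma norm_mul_norm_le (h : IsMultiplier k l φ T) (x : X) : ‖φ x‖ * ‖k x‖ ≤ ‖T‖ * ‖l x‖ := by
  simpa [h x, norm_smul] using (ContinuousLinearMap.adjoint T).le_opNorm (l x)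

lemma inner_apply (h : IsMultiplier k l φ T) (u : Hk) (x : X) :
    ⟪T u, l x⟫_ℂ = conj (φ x) * ⟪u, k x⟫_ℂ := by
  rw [← ContinuousLinearMap.adjoint_inner_right, h x, inner_smul_right]

lemma const_smul (h : IsMultiplier k l φ T) (c : ℂ) : IsMultiplier k l (c • φ) (c • T) := by
  intro x
  rw [map_smulₛₗ, smul_apply, h x, smul_smul, Pi.smul_apply, smul_eq_mul, map_mul]

lemma of_tendsto {ι : Type*} {F : Filter ι} [F.NeBot] {φs : ι → X → ℂ} {Ts : ι → Hk →L[ℂ] Hl}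
    (h : ∀ i, IsMultiplier k l (φs i) (Ts i)) (hφ : ∀ x, Tendsto (fun i => φs i x) F (𝓝 (φ x)))
    (hT : ∀ u v, Tendsto (fun i => ⟪Ts i u, v⟫_ℂ) F (𝓝 ⟪T u, v⟫_ℂ)) :
    IsMultiplier k l φ T := by
  intro x
  refine ext_inner_left ℂ fun u => ?_
  rw [ContinuousLinearMap.adjoint_inner_right, inner_smul_right]
  refine tendsto_nhds_unique (hT u (l x)) ?_
  simp_rw [(h _).inner_apply]
  exact ((Complex.continuous_conj.tendsto _).comp (hφ x)).mul_const _

end IsMultiplier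

lemma exists_isMultiplier_of_forall_lt (hk : ∀ x, k x ≠ 0) {lam : ℕ → X} {w : ℕ → ℂ} {M : ℝ}
    (h : ∀ n, ∃ (φ : X → ℂ) (T : Hk →L[ℂ] Hl),
      IsMultiplier k l φ T ∧ ‖T‖ ≤ M ∧ ∀ i < n, φ (lam i) = w i) :
    ∃ (φ : X → ℂ) (T : Hk →L[ℂ] Hl), IsMultiplier k l φ T ∧ ∀ i, φ (lam i) = w i := by
  choose φs Ts hmult hnorm hval using h
  let U := Ultrafilter.of (atTop : Filter ℕ)
  obtain ⟨T, hT⟩ := ContinuousLinearMap.exists_tendsto_inner_of_norm_le U Ts hnorm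
  have hφs_le (x : X) (n : ℕ) : ‖φs n x‖ ≤ M * ‖l x‖ / ‖k x‖ :=
    (le_div_iff₀ (norm_pos_iff.mpr (hk x))).mpr <| ((hmult n).norm_mul_norm_le x).trans
      (mul_le_mul_of_nonneg_right (hnorm n) (norm_nonneg _))
  choose φ hφ using fun x => U.exists_tendsto_of_norm_le (hφs_le x)
  refine ⟨φ, T, .of_tendsto hmult hφ hT, fun i => tendsto_nhds_unique (hφ (lam i)) ?_⟩
  refine tendsto_const_nhds.congr' (Ultrafilter.of_le _ ?_)
  filter_upwards [eventually_gt_atTop i] with n hn using (hval n i hn).symm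

end Multiplier

lemma Fin.sum_univ_eq_sum_range_extend {α M : Type*} [Zero α] [AddCommMonoid M] {n : ℕ}
    (b : Fin n → α) (g : ℕ → α → M) :
    ∑ i : Fin n, g i (b i) = ∑ m ∈ Finset.range n, g m (Function.extend Fin.val b 0 m) := by
  rw [← Fin.sum_univ_eq_sum_range]
  simp [Fin.val_injective.extend_apply]

section Gram

variable {X H : Type*} [NormedAddCommGroup H] [InnerProductSpace ℂ H] {k : X → H} {lam : ℕ → X}

lemma smul_inv_norm_smul_of_ne_zero {v : H} (hv : v ≠ 0) (c : ℂ) :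
    (c * ‖v‖) • (‖v‖⁻¹ • v) = c • v := by
  rw [← Complex.coe_smul, smul_smul, Complex.ofReal_inv, mul_assoc,
    mul_inv_cancel₀ (by exact_mod_cast norm_ne_zero_iff.mpr hv), mul_one]

lemma GramBdd.exists_norm_sum_sq_le (h : GramBdd k lam) (hk : ∀ i, k (lam i) ≠ 0) :
    ∃ C > 0, ∀ n (b : Fin n → ℂ),
      ‖∑ i, b i • k (lam i)‖ ^ 2 ≤ C * ∑ i, ‖b i‖ ^ 2 * ‖k (lam i)‖ ^ 2 := by
  obtain ⟨C, hC, hgram⟩ := h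
  refine ⟨C, hC, fun n b => ?_⟩
  have := hgram (Finset.range n) (Function.extend Fin.val (fun i => b i * ‖k (lam i)‖) 0)
  rw [← Fin.sum_univ_eq_sum_range_extend _ (fun m c => c • (‖k (lam m)‖⁻¹ • k (lam m))),
    ← Fin.sum_univ_eq_sum_range_extend _ (fun _ c => ‖c‖ ^ 2)] at this
  simpa [smul_inv_norm_smul_of_ne_zero (hk _), mul_pow] using this

lemma GramBddBelow.exists_le_norm_sum_sq (h : GramBddBelow k lam) (hk : ∀ i, k (lam i) ≠ 0) :
    ∃ c > 0, ∀ n (b : Fin n → ℂ),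
      c * ∑ i, ‖b i‖ ^ 2 * ‖k (lam i)‖ ^ 2 ≤ ‖∑ i, b i • k (lam i)‖ ^ 2 := by
  obtain ⟨c, hc, hgram⟩ := h
  refine ⟨c, hc, fun n b => ?_⟩
  have := hgram (Finset.range n) (Function.extend Fin.val (fun i => b i * ‖k (lam i)‖) 0)
  rw [← Fin.sum_univ_eq_sum_range_extend _ (fun m c => c • (‖k (lam m)‖⁻¹ • k (lam m))),
    ← Fin.sum_univ_eq_sum_range_extend _ (fun _ c => ‖c‖ ^ 2)] at this
  simpa [smul_inv_norm_smul_of_ne_zero (hk _), mul_pow] using this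

end Gram

lemma sum_sum_mul_conj_mul_inner {𝕜 E ι : Type*} [RCLike 𝕜] [NormedAddCommGroup E]
    [InnerProductSpace 𝕜 E] [Fintype ι] (a : ι → 𝕜) (f : ι → E) :
    ∑ i, ∑ j, a i * conj (a j) * ⟪f j, f i⟫_𝕜 = (‖∑ i, a i • f i‖ : 𝕜) ^ 2 := by
  rw [Finset.sum_comm, ← inner_self_eq_norm_sq_to_K, sum_inner]
  simp_rw [inner_sum, inner_smul_left, inner_smul_right]
  exact Finset.sum_congr rfl fun _ _ => Finset.sum_congr rfl fun _ _ => by ring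

section Pick

variable {X Hk Hl : Type*} [NormedAddCommGroup Hk] [InnerProductSpace ℂ Hk]
    [NormedAddCommGroup Hl] [InnerProductSpace ℂ Hl] {k : X → Hk} {l : X → Hl}

lemma pick_form_nonneg {n : ℕ} {p : Fin n → X} {w : Fin n → ℂ}
    (h : ∀ a : Fin n → ℂ, ‖∑ i, (a i * w i) • k (p i)‖ ≤ ‖∑ i, a i • l (p i)‖) (a : Fin n → ℂ) :
    0 ≤ ∑ i, ∑ j, a i * conj (a j) *
      (⟪l (p j), l (p i)⟫_ℂ - w i * conj (w j) * ⟪k (p j), k (p i)⟫_ℂ) := by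
  have hsplit : ∑ i, ∑ j, a i * conj (a j) *
      (⟪l (p j), l (p i)⟫_ℂ - w i * conj (w j) * ⟪k (p j), k (p i)⟫_ℂ) =
      ∑ i, ∑ j, a i * conj (a j) * ⟪l (p j), l (p i)⟫_ℂ -
        ∑ i, ∑ j, (a i * w i) * conj (a j * w j) * ⟪k (p j), k (p i)⟫_ℂ := by
    simp only [← Finset.sum_sub_distrib, map_mul]
    exact Finset.sum_congr rfl fun _ _ => Finset.sum_congr rfl fun _ _ => by ring
  rw [hsplit, sum_sum_mul_conj_mul_inner, sum_sum_mul_conj_mul_inner, sub_nonneg]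
  exact_mod_cast pow_le_pow_left₀ (norm_nonneg _) (h a) 2

lemma norm_sum_smul_le_of_gram {lam : ℕ → X} {w : ℕ → ℂ} {C c : ℝ}
    (hC : ∀ n (b : Fin n → ℂ), ‖∑ i, b i • k (lam i)‖ ^ 2 ≤ C * ∑ i, ‖b i‖ ^ 2 * ‖k (lam i)‖ ^ 2)
    (hc : ∀ n (b : Fin n → ℂ), c * ∑ i, ‖b i‖ ^ 2 * ‖l (lam i)‖ ^ 2 ≤ ‖∑ i, b i • l (lam i)‖ ^ 2)
    (hw : ∀ i, C * (‖w i‖ ^ 2 * ‖k (lam i)‖ ^ 2) ≤ c * ‖l (lam i)‖ ^ 2)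
    (n : ℕ) (a : Fin n → ℂ) :
    ‖∑ i : Fin n, (a i * w i) • k (lam i)‖ ≤ ‖∑ i : Fin n, a i • l (lam i)‖ := by
  refine (pow_le_pow_iff_left₀ (norm_nonneg _) (norm_nonneg _) two_ne_zero).mp ?_
  calc ‖∑ i : Fin n, (a i * w i) • k (lam i)‖ ^ 2
      ≤ C * ∑ i : Fin n, ‖a i * w i‖ ^ 2 * ‖k (lam i)‖ ^ 2 := hC n _
    _ = ∑ i : Fin n, ‖a i‖ ^ 2 * (C * (‖w i‖ ^ 2 * ‖k (lam i)‖ ^ 2)) := by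
      rw [Finset.mul_sum]
      exact Finset.sum_congr rfl fun _ _ => by rw [norm_mul]; ring
    _ ≤ ∑ i : Fin n, ‖a i‖ ^ 2 * (c * ‖l (lam i)‖ ^ 2) :=
      Finset.sum_le_sum fun i _ => mul_le_mul_of_nonneg_left (hw i) (sq_nonneg _)
    _ = c * ∑ i : Fin n, ‖a i‖ ^ 2 * ‖l (lam i)‖ ^ 2 := by
      rw [Finset.mul_sum]
      exact Finset.sum_congr rfl fun _ _ => by ring
    _ ≤ ‖∑ i : Fin n, a i • l (lam i)‖ ^ 2 := hc n a

end Pick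

lemma exists_pos_forall_mul_sq_le {ι E : Type*} [SeminormedAddCommGroup E] {α : ι → E}
    {B C c : ℝ} (hB : ∀ i, ‖α i‖ ≤ B) (hC : 0 < C) (hc : 0 < c) :
    ∃ ε > 0, ∀ i, C * (ε * ‖α i‖) ^ 2 ≤ c := by
  refine ⟨√(c / C) / (|B| + 1), by positivity, fun i => ?_⟩
  have hα : ‖α i‖ / (|B| + 1) ≤ 1 :=
    (div_le_one (by positivity)).mpr ((hB i).trans ((le_abs_self B).trans (lt_add_one _).le))
  calc C * (√(c / C) / (|B| + 1) * ‖α i‖) ^ 2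
      = C * √(c / C) ^ 2 * (‖α i‖ / (|B| + 1)) ^ 2 := by ring
    _ ≤ C * √(c / C) ^ 2 * 1 := by gcongr; exact pow_le_one₀ (by positivity) hα
    _ = c := by rw [Real.sq_sqrt (by positivity)]; field_simp

theorem statement6_general {X Hk Hl : Type*}
    [NormedAddCommGroup Hk] [InnerProductSpace ℂ Hk] [CompleteSpace Hk]
    [NormedAddCommGroup Hl] [InnerProductSpace ℂ Hl] [CompleteSpace Hl]
    (k : X → Hk) (hk : ∀ x, k x ≠ 0)
    (l : X → Hl) (hl : ∀ x, l x ≠ 0)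
    (hpick : PickPair k l)
    (lam : ℕ → X) (hinj : Function.Injective lam)
    (hbdd : GramBdd k lam) (hbelow : GramBddBelow l lam) :
    InterpMultPair k l lam := by
  rintro α ⟨B, hB⟩
  obtain ⟨C, hC0, hC⟩ := hbdd.exists_norm_sum_sq_le (hk <| lam ·)
  obtain ⟨c, hc0, hc⟩ := hbelow.exists_le_norm_sum_sq (hl <| lam ·)
  obtain ⟨ε, hε0, hε⟩ := exists_pos_forall_mul_sq_le hB hC0 hc0
  set w : ℕ → ℂ := fun i => ε * (α i * ‖l (lam i)‖ / ‖k (lam i)‖)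
  have hw (i : ℕ) : C * (‖w i‖ ^ 2 * ‖k (lam i)‖ ^ 2) ≤ c * ‖l (lam i)‖ ^ 2 := by
    have : ‖k (lam i)‖ ≠ 0 := norm_ne_zero_iff.mpr (hk (lam i))
    calc _ = C * (ε * ‖α i‖) ^ 2 * ‖l (lam i)‖ ^ 2 := by
          simp only [w, norm_mul, norm_div, Complex.norm_real, norm_norm,
            Real.norm_of_nonneg hε0.le]
          field_simp
      _ ≤ _ := by gcongr; exact hε i
  obtain ⟨φ, T, hφT, hφ⟩ := exists_isMultiplier_of_forall_lt hk (w := w) fun n => by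
    obtain ⟨φ, T, hφT, hT, hφ⟩ := hpick n (lam ∘ Fin.val) (hinj.comp Fin.val_injective)
      (w ∘ Fin.val) (pick_form_nonneg (norm_sum_smul_le_of_gram hC hc hw n))
    exact ⟨φ, T, hφT, hT, fun i hi => hφ ⟨i, hi⟩⟩
  refine ⟨(ε : ℂ)⁻¹ • φ, (ε : ℂ)⁻¹ • T, hφT.const_smul _, fun i => ?_⟩
  simp [hφ, w, hε0.ne']

/-- **Proposition 4.1 (ii)**: if the pair `(k, ℓ)` has the Pick property, and the Gram
matrix with respect to `k` is bounded while the Gram matrix with respect to `ℓ` is bounded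
below, then the sequence is interpolating for `Mult(H_k, H_ℓ)`. -/
theorem statement6 {X Hk Hl : Type*}
    [NormedAddCommGroup Hk] [InnerProductSpace ℂ Hk] [CompleteSpace Hk]
    [NormedAddCommGroup Hl] [InnerProductSpace ℂ Hl] [CompleteSpace Hl]
    (k : X → Hk) (hk : ∀ x, k x ≠ 0)
    (hdense_k : Dense ((Submodule.span ℂ (Set.range k) : Submodule ℂ Hk) : Set Hk))
    (l : X → Hl) (hl : ∀ x, l x ≠ 0)
    (hdense_l : Dense ((Submodule.span ℂ (Set.range l) : Submodule ℂ Hl) : Set Hl))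
    (hpick : PickPair k l)
    (lam : ℕ → X) (hinj : Function.Injective lam)
    (hbdd : GramBdd k lam) (hbelow : GramBddBelow l lam) :
    InterpMultPair k l lam :=
  statement6_general k hk l hl hpick lam hinj hbdd hbelow
end
end

section
/- Let (H_k, k) and (H_ℓ, ℓ) be RKHSs on a set X such that the pair (k, ℓ) has the Pick property. Let F ⊆ X, let α : F → ℂ, and suppose there is a bounded operator T from the closed linear span of {ℓ_λ : λ ∈ F} into H_k such that T(ℓ_λ/‖ℓ_λ‖) = conj(α(λ)) · k_λ/‖k_λ‖ for every λ ∈ F. Then there exists φ ∈ Mult(H_k, H_ℓ) with ‖M_φ‖ ≤ ‖T‖ such that φ(λ) = α(λ)·‖ℓ_λ‖/‖k_λ‖ for all λ ∈ F (i.e., the Pick property for finite sets implies solvability of Pick problems with infinitely many nodes, with no increase in norm). -/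
noncomputable section

open scoped InnerProductSpace ComplexOrder

open Filter Topology

/-!
Write `w λ = α λ ‖ℓ_λ‖ / ‖k_λ‖`, so that `T ℓ_λ = conj (w λ) k_λ`. On every finite set of nodes,
`T` then bounds `‖∑ aᵢ conj (w λᵢ) k_{λᵢ}‖` by `‖T‖ ‖∑ aᵢ ℓ_{λᵢ}‖`, which is the Pick condition
for the data `w / ‖T‖`; the Pick property therefore gives a contractive multiplier interpolating
these data on that finite set. Along an ultrafilter finer than the filter of finite subsets of `X`,
these contractions have a weak operator limit (bounded sets of operators are weakly relatively
compact), and a weak limit of multipliers is a multiplier whose symbol is the pointwise limit of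
the symbols. It interpolates on all of `F`; multiplying by `‖T‖` gives the result.
-/

theorem Ultrafilter.exists_tendsto_of_forall_norm_le {ι E : Type*} [SeminormedAddCommGroup E]
    [ProperSpace E] (U : Ultrafilter ι) {f : ι → E} {r : ℝ} (hf : ∀ i, ‖f i‖ ≤ r) :
    ∃ z, ‖z‖ ≤ r ∧ Tendsto f U (𝓝 z) := by
  obtain ⟨z, hz, hlim⟩ := (isCompact_closedBall (0 : E) r).ultrafilter_le_nhds (U.map f)
    (by rw [Ultrafilter.coe_map, le_principal_iff, Filter.mem_map]
        exact univ_mem' fun i => mem_closedBall_zero_iff.mpr (hf i))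
  exact ⟨z, mem_closedBall_zero_iff.mp hz, hlim⟩

section WeakLimits

variable {ι 𝕜 E F : Type*} [RCLike 𝕜] [NormedAddCommGroup E] [InnerProductSpace 𝕜 E]
  [NormedAddCommGroup F] [InnerProductSpace 𝕜 F] [CompleteSpace F] (U : Ultrafilter ι)

theorem Ultrafilter.exists_tendsto_inner_of_forall_norm_le {v : ι → F} {r : ℝ}
    (hv : ∀ i, ‖v i‖ ≤ r) :
    ∃ v₀, ‖v₀‖ ≤ r ∧ ∀ y, Tendsto (fun i => ⟪v i, y⟫_𝕜) U (𝓝 ⟪v₀, y⟫_𝕜) := by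
  obtain ⟨i, -⟩ := U.nonempty_of_mem univ_mem
  have hr : 0 ≤ r := (norm_nonneg _).trans (hv i)
  have hbound : ∀ y i, ‖⟪v i, y⟫_𝕜‖ ≤ r * ‖y‖ := fun y i =>
    (norm_inner_le_norm _ _).trans (mul_le_mul_of_nonneg_right (hv i) (norm_nonneg y))
  choose z hz_norm hz using fun y => U.exists_tendsto_of_forall_norm_le (hbound y)
  let L : F →ₗ[𝕜] 𝕜 := linearMapOfTendsto z (fun i => innerₛₗ 𝕜 (v i)) (tendsto_pi_nhds.2 hz)
  let v₀ := (InnerProductSpace.toDual 𝕜 F).symm (L.mkContinuous r hz_norm)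
  refine ⟨v₀, ?_, fun y => ?_⟩
  · rw [LinearIsometryEquiv.norm_map]
    exact LinearMap.mkContinuous_norm_le _ hr _
  · rw [InnerProductSpace.toDual_symm_apply]
    exact hz y

theorem Ultrafilter.exists_tendsto_inner_apply_of_forall_opNorm_le {S : ι → E →L[𝕜] F} {C : ℝ}
    (hS : ∀ i, ‖S i‖ ≤ C) :
    ∃ S₀ : E →L[𝕜] F, ‖S₀‖ ≤ C ∧
      ∀ x y, Tendsto (fun i => ⟪S i x, y⟫_𝕜) U (𝓝 ⟪S₀ x, y⟫_𝕜) := by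
  obtain ⟨i, -⟩ := U.nonempty_of_mem univ_mem
  choose f hf_norm hf using fun x =>
    U.exists_tendsto_inner_of_forall_norm_le (𝕜 := 𝕜) fun i => (S i).le_of_opNorm_le (hS i) x
  have hf_add : ∀ x x', f (x + x') = f x + f x' := fun x x' => ext_inner_right 𝕜 fun y => by
    rw [inner_add_left]
    refine tendsto_nhds_unique (hf (x + x') y) ?_
    simpa only [map_add, inner_add_left] using (hf x y).add (hf x' y)
  have hf_smul : ∀ (c : 𝕜) x, f (c • x) = c • f x := fun c x => ext_inner_right 𝕜 fun y => by
    rw [inner_smul_left]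
    refine tendsto_nhds_unique (hf (c • x) y) ?_
    simpa only [map_smul, inner_smul_left] using (hf x y).const_mul (starRingEnd 𝕜 c)
  refine ⟨LinearMap.mkContinuous ⟨⟨f, hf_add⟩, hf_smul⟩ C hf_norm, ?_, hf⟩
  exact LinearMap.mkContinuous_norm_le _ ((norm_nonneg _).trans (hS i)) _

end WeakLimits

theorem ContinuousLinearMap.norm_sum_smul_le_of_apply_eq {ι 𝕜 V W : Type*} [RCLike 𝕜]
    [SeminormedAddCommGroup V] [NormedSpace 𝕜 V] [SeminormedAddCommGroup W] [NormedSpace 𝕜 W]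
    (A : V →L[𝕜] W) {u : ι → V} {v : ι → W} {c : ι → 𝕜} (hA : ∀ i, A (u i) = c i • v i)
    (s : Finset ι) (a : ι → 𝕜) :
    ‖∑ i ∈ s, (a i * c i) • v i‖ ≤ ‖A‖ * ‖∑ i ∈ s, a i • u i‖ := by
  have hsum : A (∑ i ∈ s, a i • u i) = ∑ i ∈ s, (a i * c i) • v i := by
    simp only [map_sum, map_smul, hA, smul_smul]
  exact hsum ▸ A.le_opNorm _

theorem pick_form_eq_inner_self_sub_inner_self {ι E F : Type*} [Fintype ι]
    [SeminormedAddCommGroup E] [InnerProductSpace ℂ E]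
    [SeminormedAddCommGroup F] [InnerProductSpace ℂ F] (u : ι → E) (v : ι → F) (a w : ι → ℂ) :
    ∑ i, ∑ j, a i * (starRingEnd ℂ) (a j) *
        (⟪u j, u i⟫_ℂ - w i * (starRingEnd ℂ) (w j) * ⟪v j, v i⟫_ℂ)
      = ⟪∑ i, a i • u i, ∑ i, a i • u i⟫_ℂ
        - ⟪∑ i, (a i * w i) • v i, ∑ i, (a i * w i) • v i⟫_ℂ := by
  rw [sum_inner, sum_inner, ← Finset.sum_sub_distrib, Finset.sum_comm]
  refine Finset.sum_congr rfl fun j _ => ?_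
  simp only [inner_sum, inner_smul_left, inner_smul_right, ← Finset.sum_sub_distrib, map_mul]
  refine Finset.sum_congr rfl fun i _ => ?_
  ring

theorem pick_form_nonneg_of_norm_le {ι E F : Type*} [Fintype ι]
    [SeminormedAddCommGroup E] [InnerProductSpace ℂ E]
    [SeminormedAddCommGroup F] [InnerProductSpace ℂ F] {u : ι → E} {v : ι → F} {a w : ι → ℂ}
    (h : ‖∑ i, (a i * w i) • v i‖ ≤ ‖∑ i, a i • u i‖) :
    0 ≤ ∑ i, ∑ j, a i * (starRingEnd ℂ) (a j) *
        (⟪u j, u i⟫_ℂ - w i * (starRingEnd ℂ) (w j) * ⟪v j, v i⟫_ℂ) := by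
  rw [pick_form_eq_inner_self_sub_inner_self, inner_self_eq_norm_sq_to_K,
    inner_self_eq_norm_sq_to_K, sub_nonneg]
  exact_mod_cast pow_le_pow_left₀ (norm_nonneg _) h 2

section Multipliers

variable {X Hk Hl : Type*}
  [NormedAddCommGroup Hk] [InnerProductSpace ℂ Hk] [CompleteSpace Hk]
  [NormedAddCommGroup Hl] [InnerProductSpace ℂ Hl] [CompleteSpace Hl]
  {k : X → Hk} {l : X → Hl}

theorem IsMultiplier.norm_sum_smul_le {φ : X → ℂ} {S : Hk →L[ℂ] Hl} (hS : IsMultiplier k l φ S)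
    {ι : Type*} (p : ι → X) (s : Finset ι) (a : ι → ℂ) :
    ‖∑ i ∈ s, (a i * starRingEnd ℂ (φ (p i))) • k (p i)‖ ≤ ‖S‖ * ‖∑ i ∈ s, a i • l (p i)‖ := by
  simpa only [ContinuousLinearMap.adjoint.norm_map] using
    (ContinuousLinearMap.adjoint S).norm_sum_smul_le_of_apply_eq (fun i => hS (p i)) s a

theorem IsMultiplier.inner_apply_eq {φ : X → ℂ} {S : Hk →L[ℂ] Hl} (hS : IsMultiplier k l φ S)
    (u : Hk) (x : X) : ⟪S u, l x⟫_ℂ = starRingEnd ℂ (φ x) * ⟪u, k x⟫_ℂ := by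
  rw [← ContinuousLinearMap.adjoint_inner_right, hS x, inner_smul_right]

theorem IsMultiplier.exists_of_tendsto (hk : ∀ x, k x ≠ 0) {ι : Type*} {L : Filter ι} [L.NeBot]
    {Φ : ι → X → ℂ} {S : ι → Hk →L[ℂ] Hl} {S₀ : Hk →L[ℂ] Hl}
    (hS : ∀ i, IsMultiplier k l (Φ i) (S i))
    (hlim : ∀ u y, Tendsto (fun i => ⟪S i u, y⟫_ℂ) L (𝓝 ⟪S₀ u, y⟫_ℂ)) :
    ∃ φ, IsMultiplier k l φ S₀ ∧ ∀ x, Tendsto (fun i => Φ i x) L (𝓝 (φ x)) := by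
  let ψ x := ⟪S₀ (k x), l x⟫_ℂ / ⟪k x, k x⟫_ℂ
  have hψ : ∀ x, Tendsto (fun i => starRingEnd ℂ (Φ i x)) L (𝓝 (ψ x)) := fun x => by
    have hkx : ⟪k x, k x⟫_ℂ ≠ 0 := inner_self_ne_zero.mpr (hk x)
    simpa only [(hS _).inner_apply_eq, mul_div_cancel_right₀ _ hkx]
      using (hlim (k x) (l x)).div_const ⟪k x, k x⟫_ℂ
  refine ⟨fun x => starRingEnd ℂ (ψ x), fun x => ext_inner_left ℂ fun u => ?_, fun x => ?_⟩
  · rw [ContinuousLinearMap.adjoint_inner_right, Complex.conj_conj, inner_smul_right]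
    exact tendsto_nhds_unique (hlim u (l x))
      (by simpa only [(hS _).inner_apply_eq] using (hψ x).mul_const ⟪u, k x⟫_ℂ)
  · simpa only [Function.comp_def, Complex.conj_conj]
      using (Complex.continuous_conj.tendsto _).comp (hψ x)

end Multipliers

namespace PickPair

variable {X Hk Hl : Type*}
  [NormedAddCommGroup Hk] [InnerProductSpace ℂ Hk] [CompleteSpace Hk]
  [NormedAddCommGroup Hl] [InnerProductSpace ℂ Hl] [CompleteSpace Hl]
  {k : X → Hk} {l : X → Hl}

theorem exists_of_norm_le (hpick : PickPair k l) {n : ℕ} {p : Fin n → X}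
    (hp : Function.Injective p) {w : Fin n → ℂ}
    (h : ∀ a : Fin n → ℂ, ‖∑ i, (a i * w i) • k (p i)‖ ≤ ‖∑ i, a i • l (p i)‖) :
    ∃ (φ : X → ℂ) (S : Hk →L[ℂ] Hl), IsMultiplier k l φ S ∧ ‖S‖ ≤ 1 ∧ ∀ i, φ (p i) = w i :=
  hpick n p hp w fun a => pick_form_nonneg_of_norm_le (h a)

/-- The form in `PickPair` controls `∑ aᵢ wᵢ k_{pᵢ}`, whereas a multiplier `φ` controls
`∑ aᵢ conj (φ pᵢ) k_{pᵢ}`. So the Pick property is applied first to the values `conj w`, and then,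
through the norm bound of the multiplier this produces, to `w` itself. -/
theorem exists_of_norm_conj_le (hpick : PickPair k l) {n : ℕ} {p : Fin n → X}
    (hp : Function.Injective p) {w : Fin n → ℂ}
    (h : ∀ a : Fin n → ℂ, ‖∑ i, (a i * starRingEnd ℂ (w i)) • k (p i)‖ ≤ ‖∑ i, a i • l (p i)‖) :
    ∃ (φ : X → ℂ) (S : Hk →L[ℂ] Hl), IsMultiplier k l φ S ∧ ‖S‖ ≤ 1 ∧ ∀ i, φ (p i) = w i := by
  obtain ⟨ψ, S, hS, hS_norm, hψ⟩ := hpick.exists_of_norm_le hp h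
  refine hpick.exists_of_norm_le hp fun a => ?_
  have hbound := hS.norm_sum_smul_le p Finset.univ a
  simp only [hψ, Complex.conj_conj] at hbound
  exact hbound.trans (mul_le_of_le_one_left (norm_nonneg _) hS_norm)

theorem exists_on_finset (hpick : PickPair k l) {G : Set X} {w : X → ℂ}
    (h : ∀ (n : ℕ) (p : Fin n → X), (∀ i, p i ∈ G) → ∀ a : Fin n → ℂ,
      ‖∑ i, (a i * starRingEnd ℂ (w (p i))) • k (p i)‖ ≤ ‖∑ i, a i • l (p i)‖)
    (E : Finset X) :
    ∃ (φ : X → ℂ) (S : Hk →L[ℂ] Hl), IsMultiplier k l φ S ∧ ‖S‖ ≤ 1 ∧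
      ∀ x ∈ E, x ∈ G → φ x = w x := by
  classical
  let E' := E.filter (· ∈ G)
  let p : Fin E'.card → X := fun i => E'.equivFin.symm i
  have hpG : ∀ i, p i ∈ G := fun i => (Finset.mem_filter.mp (E'.equivFin.symm i).2).2
  obtain ⟨φ, S, hS, hS_norm, hφ⟩ := hpick.exists_of_norm_conj_le
    (Subtype.val_injective.comp E'.equivFin.symm.injective) (h _ p hpG)
  refine ⟨φ, S, hS, hS_norm, fun x hxE hxG => ?_⟩
  have hx : x = p (E'.equivFin ⟨x, Finset.mem_filter.mpr ⟨hxE, hxG⟩⟩) := by simp [p]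
  rw [hx]
  exact hφ _

theorem exists_isMultiplier_of_norm_le_one (hk : ∀ x, k x ≠ 0) (hpick : PickPair k l)
    {F : Set X} {w : X → ℂ}
    (h : ∀ (n : ℕ) (p : Fin n → X), (∀ i, p i ∈ F) → ∀ a : Fin n → ℂ,
      ‖∑ i, (a i * starRingEnd ℂ (w (p i))) • k (p i)‖ ≤ ‖∑ i, a i • l (p i)‖) :
    ∃ (φ : X → ℂ) (S : Hk →L[ℂ] Hl), IsMultiplier k l φ S ∧ ‖S‖ ≤ 1 ∧ ∀ x ∈ F, φ x = w x := by
  choose Φ S hS hS_norm hΦ using hpick.exists_on_finset h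
  let U : Ultrafilter (Finset X) := .of atTop
  obtain ⟨S₀, hS₀_norm, hlim⟩ := U.exists_tendsto_inner_apply_of_forall_opNorm_le hS_norm
  obtain ⟨φ, hφ, hΦφ⟩ := IsMultiplier.exists_of_tendsto hk hS hlim
  refine ⟨φ, S₀, hφ, hS₀_norm, fun x hx => tendsto_nhds_unique (hΦφ x) ?_⟩
  have hΦx : ∀ᶠ E in atTop, Φ E x = w x := (eventually_ge_atTop {x}).mono fun E hE =>
    hΦ E x (Finset.singleton_subset_iff.mp hE) hx
  have hUx : ∀ᶠ E in (U : Filter (Finset X)), Φ E x = w x := Ultrafilter.of_le atTop hΦx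
  exact tendsto_const_nhds.congr' (hUx.mono fun E h => h.symm)

theorem exists_isMultiplier_of_norm_le (hk : ∀ x, k x ≠ 0) (hpick : PickPair k l)
    {F : Set X} {w : X → ℂ} {C : ℝ} (hC : 0 ≤ C)
    (h : ∀ (n : ℕ) (p : Fin n → X), (∀ i, p i ∈ F) → ∀ a : Fin n → ℂ,
      ‖∑ i, (a i * starRingEnd ℂ (w (p i))) • k (p i)‖ ≤ C * ‖∑ i, a i • l (p i)‖) :
    ∃ (φ : X → ℂ) (S : Hk →L[ℂ] Hl), IsMultiplier k l φ S ∧ ‖S‖ ≤ C ∧ ∀ x ∈ F, φ x = w x := by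
  have hw : ∀ x ∈ F, C = 0 → w x = 0 := fun x hx hC0 => by
    simpa [hC0, hk x] using h 1 ![x] (by simp [hx]) 1
  have hw_div : ∀ (n : ℕ) (p : Fin n → X), (∀ i, p i ∈ F) → ∀ a : Fin n → ℂ,
      ‖∑ i, (a i * starRingEnd ℂ (w (p i) / C)) • k (p i)‖ ≤ ‖∑ i, a i • l (p i)‖ := by
    intro n p hp a
    have hsum : ∑ i, (a i * starRingEnd ℂ (w (p i) / C)) • k (p i)
        = (C⁻¹ : ℂ) • ∑ i, (a i * starRingEnd ℂ (w (p i))) • k (p i) := by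
      simp only [Finset.smul_sum, smul_smul, map_div₀, Complex.conj_ofReal]
      exact Finset.sum_congr rfl fun i _ => by ring_nf
    calc _ = C⁻¹ * ‖∑ i, (a i * starRingEnd ℂ (w (p i))) • k (p i)‖ := by
          rw [hsum, norm_smul, norm_inv, Complex.norm_real, Real.norm_of_nonneg hC]
      _ ≤ C⁻¹ * (C * ‖∑ i, a i • l (p i)‖) := by gcongr; exact h n p hp a
      _ ≤ ‖∑ i, a i • l (p i)‖ := by
          rw [← mul_assoc]
          exact mul_le_of_le_one_left (norm_nonneg _) (inv_mul_le_one_of_le₀ le_rfl hC)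
  obtain ⟨φ, S, hS, hS_norm, hφ⟩ :=
    hpick.exists_isMultiplier_of_norm_le_one hk (w := fun x => w x / C) hw_div
  refine ⟨fun x => C * φ x, (C : ℂ) • S, fun x => ?_, ?_, fun x hx => ?_⟩
  · dsimp only
    rw [map_smulₛₗ, smul_apply, hS x, smul_smul, map_mul, Complex.conj_ofReal]
  · calc ‖(C : ℂ) • S‖ ≤ C * ‖S‖ := by
          simpa [abs_of_nonneg hC] using ContinuousLinearMap.opNorm_smul_le (C : ℂ) S
      _ ≤ C := mul_le_of_le_one_right hC hS_norm
  · rcases hC.eq_or_lt with rfl | hC_pos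
    · simp [hw x hx rfl]
    · dsimp only
      rw [hφ x hx, mul_div_cancel₀ _ (by exact_mod_cast hC_pos.ne')]

end PickPair

theorem statement7_general {X Hk Hl : Type*}
    [NormedAddCommGroup Hk] [InnerProductSpace ℂ Hk] [CompleteSpace Hk]
    [NormedAddCommGroup Hl] [InnerProductSpace ℂ Hl] [CompleteSpace Hl]
    (k : X → Hk) (hk : ∀ x, k x ≠ 0)
    (l : X → Hl) (hl : ∀ x, l x ≠ 0)
    (hpick : PickPair k l)
    (F : Set X) (α : X → ℂ)
    (T : (Submodule.span ℂ (l '' F)).topologicalClosure →L[ℂ] Hk)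
    (hT : ∀ (lam : X) (hlam : lam ∈ F),
      T ⟨(‖l lam‖ : ℂ)⁻¹ • l lam,
          Submodule.le_topologicalClosure _
            (Submodule.smul_mem _ _ (Submodule.subset_span ⟨lam, hlam, rfl⟩))⟩
        = (starRingEnd ℂ) (α lam) • ((‖k lam‖ : ℂ)⁻¹ • k lam)) :
    ∃ (φ : X → ℂ) (S : Hk →L[ℂ] Hl), IsMultiplier k l φ S ∧ ‖S‖ ≤ ‖T‖ ∧
      ∀ lam ∈ F, φ lam = α lam * (‖l lam‖ : ℂ) / (‖k lam‖ : ℂ) := by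
  let V := (Submodule.span ℂ (l '' F)).topologicalClosure
  have hlV : ∀ x ∈ F, l x ∈ V := fun x hx =>
    Submodule.le_topologicalClosure _ (Submodule.subset_span ⟨x, hx, rfl⟩)
  have hTl : ∀ x (hx : x ∈ F),
      T ⟨l x, hlV x hx⟩ = starRingEnd ℂ (α x * ‖l x‖ / ‖k x‖) • k x := by
    intro x hx
    have hlx : (‖l x‖ : ℂ) ≠ 0 := by exact_mod_cast norm_ne_zero_iff.mpr (hl x)
    have h := hT x hx
    rw [← SetLike.mk_smul_mk _ _ _ (hlV x hx), map_smul, inv_smul_eq_iff₀ hlx, smul_smul,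
      smul_smul] at h
    rw [h, map_div₀, map_mul, Complex.conj_ofReal, Complex.conj_ofReal]
    ring_nf
  refine hpick.exists_isMultiplier_of_norm_le hk (norm_nonneg T) fun n p hp a => ?_
  simpa using T.norm_sum_smul_le_of_apply_eq (u := fun i => ⟨l (p i), hlV _ (hp i)⟩)
    (fun i => hTl (p i) (hp i)) Finset.univ a

/-- The Pick property for finite sets of nodes implies solvability of Pick problems with
infinitely many nodes, with no increase in norm: any bounded operator on the closed span of
the kernel functions over `F ⊆ X` acting by `ℓ_λ/‖ℓ_λ‖ ↦ conj (α λ) • k_λ/‖k_λ‖` extends to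
the adjoint of a multiplier of norm at most `‖T‖` interpolating the prescribed values. -/
theorem statement7 {X Hk Hl : Type*}
    [NormedAddCommGroup Hk] [InnerProductSpace ℂ Hk] [CompleteSpace Hk]
    [NormedAddCommGroup Hl] [InnerProductSpace ℂ Hl] [CompleteSpace Hl]
    (k : X → Hk) (hk : ∀ x, k x ≠ 0)
    (hdense_k : Dense ((Submodule.span ℂ (Set.range k) : Submodule ℂ Hk) : Set Hk))
    (l : X → Hl) (hl : ∀ x, l x ≠ 0)
    (hdense_l : Dense ((Submodule.span ℂ (Set.range l) : Submodule ℂ Hl) : Set Hl))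
    (hpick : PickPair k l)
    (F : Set X) (α : X → ℂ)
    (T : (Submodule.span ℂ (l '' F)).topologicalClosure →L[ℂ] Hk)
    (hT : ∀ (lam : X) (hlam : lam ∈ F),
      T ⟨(‖l lam‖ : ℂ)⁻¹ • l lam,
          Submodule.le_topologicalClosure _
            (Submodule.smul_mem _ _ (Submodule.subset_span ⟨lam, hlam, rfl⟩))⟩
        = (starRingEnd ℂ) (α lam) • ((‖k lam‖ : ℂ)⁻¹ • k lam)) :
    ∃ (φ : X → ℂ) (S : Hk →L[ℂ] Hl), IsMultiplier k l φ S ∧ ‖S‖ ≤ ‖T‖ ∧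
      ∀ lam ∈ F, φ lam = α lam * (‖l lam‖ : ℂ) / (‖k lam‖ : ℂ) :=
  statement7_general k hk l hl hpick F α T hT
end
end

section
/- Let s be a normalized complete Pick kernel on a set X realized by an RKHS (H_s, s), let g be a positive semidefinite kernel on X with g(x,x) > 0 for all x ∈ X, let (H_ℓ, ℓ) be an RKHS on X whose kernel satisfies ⟨ℓ_w, ℓ_z⟩ = g(z,w)·⟨s_w, s_z⟩ for all z, w ∈ X, and let (λ_i) be a sequence of distinct points of X. (a) If the Gram matrix of (λ_i) with respect to s is bounded, then the Gram matrix of (λ_i) with respect to ℓ is bounded; consequently, if (λ_i) satisfies the Carleson condition for H_s then it satisfies the Carleson condition for H_ℓ. (b) If the Gram matrix of (λ_i) with respect to s is bounded below, then the Gram matrix of (λ_i) with respect to ℓ is bounded below. -/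
noncomputable section

open scoped InnerProductSpace ComplexOrder

/-- The sequence `lam` satisfies the Carleson measure condition for the RKHS with kernel
map `k` (stated via finite partial sums). -/
def CarlesonCond {X H : Type*} [NormedAddCommGroup H] [InnerProductSpace ℂ H]
    (k : X → H) (lam : ℕ → X) : Prop :=
  ∃ C > (0 : ℝ), ∀ f : H, ∀ F : Finset ℕ,
    ∑ i ∈ F, ‖⟪k (lam i), f⟫_ℂ‖ ^ 2 / ‖k (lam i)‖ ^ 2 ≤ C * ‖f‖ ^ 2

private lemma gram_expand {H : Type*} [NormedAddCommGroup H] [InnerProductSpace ℂ H]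
    (F : Finset ℕ) (v : ℕ → H) (a : ℕ → ℂ) :
    ⟪∑ i ∈ F, a i • v i, ∑ j ∈ F, a j • v j⟫_ℂ =
      ∑ i ∈ F, ∑ j ∈ F, (starRingEnd ℂ) (a i) * (a j * ⟪v i, v j⟫_ℂ) := by
  rw [sum_inner]
  refine Finset.sum_congr rfl fun i _ => ?_
  rw [inner_smul_left, inner_sum, Finset.mul_sum]
  refine Finset.sum_congr rfl fun j _ => ?_
  rw [inner_smul_right]

private lemma main_core {Hs Hl M : Type*}
    [NormedAddCommGroup Hs] [InnerProductSpace ℂ Hs]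
    [NormedAddCommGroup Hl] [InnerProductSpace ℂ Hl]
    [NormedAddCommGroup M] [InnerProductSpace ℂ M]
    (sh : ℕ → Hs) (lh : ℕ → Hl) (gh : ℕ → M)
    (hγ : ∀ i, ‖gh i‖ = 1)
    (hmul : ∀ i j, ⟪lh i, lh j⟫_ℂ = ⟪sh i, sh j⟫_ℂ * ⟪gh i, gh j⟫_ℂ)
    (F : Finset ℕ) (a : ℕ → ℂ) :
    ∃ (n : ℕ) (bb : Fin n → ℕ → ℂ),
      (‖∑ i ∈ F, a i • lh i‖ ^ 2 = ∑ k : Fin n, ‖∑ i ∈ F, bb k i • sh i‖ ^ 2) ∧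
      (∀ i ∈ F, ∑ k : Fin n, ‖bb k i‖ ^ 2 = ‖a i‖ ^ 2) := by
  classical
  set V : Submodule ℂ M := Submodule.span ℂ (gh '' (F : Set ℕ)) with hV
  haveI : FiniteDimensional ℂ V :=
    FiniteDimensional.span_of_finite ℂ ((F.finite_toSet).image gh)
  set n := Module.finrank ℂ V with hn
  set e := stdOrthonormalBasis ℂ V with he
  have hmem : ∀ i ∈ F, gh i ∈ V := fun i hi =>
    Submodule.subset_span ⟨i, hi, rfl⟩
  have hA : ∀ i ∈ F, ∀ j ∈ F,
      ∑ k : Fin n, ⟪gh i, (e k : M)⟫_ℂ * ⟪(e k : M), gh j⟫_ℂ = ⟪gh i, gh j⟫_ℂ := by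
    intro i hi j hj
    have := e.sum_inner_mul_inner (⟨gh i, hmem i hi⟩ : V) (⟨gh j, hmem j hj⟩ : V)
    simpa [Submodule.coe_inner] using this
  refine ⟨n, fun k i => a i * ⟪(e k : M), gh i⟫_ℂ, ?_, ?_⟩
  · -- main identity
    have key : ∀ i ∈ F, ∀ j ∈ F,
        (starRingEnd ℂ) (a i) * (a j * ⟪lh i, lh j⟫_ℂ) =
        ∑ k : Fin n, (starRingEnd ℂ) (a i * ⟪(e k : M), gh i⟫_ℂ) *
          ((a j * ⟪(e k : M), gh j⟫_ℂ) * ⟪sh i, sh j⟫_ℂ) := by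
      intro i hi j hj
      rw [hmul, ← hA i hi j hj]
      simp only [Finset.mul_sum]
      refine Finset.sum_congr rfl fun k _ => ?_
      rw [map_mul, inner_conj_symm]
      ring
    have hc : ⟪∑ i ∈ F, a i • lh i, ∑ j ∈ F, a j • lh j⟫_ℂ =
        ∑ k : Fin n, ⟪∑ i ∈ F, (a i * ⟪(e k : M), gh i⟫_ℂ) • sh i,
          ∑ j ∈ F, (a j * ⟪(e k : M), gh j⟫_ℂ) • sh j⟫_ℂ := by
      rw [gram_expand]
      rw [Finset.sum_congr rfl fun i hi => Finset.sum_congr rfl fun j hj => key i hi j hj]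
      calc ∑ i ∈ F, ∑ j ∈ F, ∑ k : Fin n, (starRingEnd ℂ) (a i * ⟪(e k : M), gh i⟫_ℂ) *
              ((a j * ⟪(e k : M), gh j⟫_ℂ) * ⟪sh i, sh j⟫_ℂ)
          = ∑ i ∈ F, ∑ k : Fin n, ∑ j ∈ F, (starRingEnd ℂ) (a i * ⟪(e k : M), gh i⟫_ℂ) *
              ((a j * ⟪(e k : M), gh j⟫_ℂ) * ⟪sh i, sh j⟫_ℂ) :=
            Finset.sum_congr rfl fun i _ => Finset.sum_comm
        _ = ∑ k : Fin n, ∑ i ∈ F, ∑ j ∈ F, (starRingEnd ℂ) (a i * ⟪(e k : M), gh i⟫_ℂ) *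
              ((a j * ⟪(e k : M), gh j⟫_ℂ) * ⟪sh i, sh j⟫_ℂ) := Finset.sum_comm
        _ = ∑ k : Fin n, ⟪∑ i ∈ F, (a i * ⟪(e k : M), gh i⟫_ℂ) • sh i,
              ∑ j ∈ F, (a j * ⟪(e k : M), gh j⟫_ℂ) • sh j⟫_ℂ :=
            Finset.sum_congr rfl fun k _ => (gram_expand F sh _).symm
    simp only [inner_self_eq_norm_sq_to_K] at hc
    exact_mod_cast hc
  · -- Parseval
    intro i hi
    have h3 : ∑ k : Fin n, ‖⟪(e k : M), gh i⟫_ℂ‖ ^ 2 = 1 := by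
      set w : V := ⟨gh i, hmem i hi⟩ with hw
      have hrw : ∀ k, ⟪(e k : M), gh i⟫_ℂ = e.repr w k := by
        intro k
        rw [e.repr_apply_apply w k, Submodule.coe_inner]
      calc ∑ k : Fin n, ‖⟪(e k : M), gh i⟫_ℂ‖ ^ 2
          = ∑ k : Fin n, ‖e.repr w k‖ ^ 2 := by
            exact Finset.sum_congr rfl fun k _ => by rw [hrw k]
        _ = ‖e.repr w‖ ^ 2 := by
            rw [EuclideanSpace.norm_eq, Real.sq_sqrt]
            positivity
        _ = ‖w‖ ^ 2 := by rw [e.repr.norm_map]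
        _ = 1 := by
            have : ‖w‖ = ‖gh i‖ := rfl
            rw [this, hγ i, one_pow]
    calc ∑ k : Fin n, ‖a i * ⟪(e k : M), gh i⟫_ℂ‖ ^ 2
        = ∑ k : Fin n, ‖a i‖ ^ 2 * ‖⟪(e k : M), gh i⟫_ℂ‖ ^ 2 := by
          refine Finset.sum_congr rfl fun k _ => ?_; rw [norm_mul]; ring
      _ = ‖a i‖ ^ 2 * ∑ k : Fin n, ‖⟪(e k : M), gh i⟫_ℂ‖ ^ 2 := by rw [Finset.mul_sum]
      _ = ‖a i‖ ^ 2 := by rw [h3, mul_one]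


private lemma inner_normalized_sq {H : Type*} [NormedAddCommGroup H] [InnerProductSpace ℂ H]
    (x f : H) : ‖⟪f, ‖x‖⁻¹ • x⟫_ℂ‖ ^ 2 = ‖⟪x, f⟫_ℂ‖ ^ 2 / ‖x‖ ^ 2 := by
  rw [RCLike.real_smul_eq_coe_smul (K := ℂ), inner_smul_right, norm_mul,
    norm_inner_symm f x, RCLike.norm_ofReal, abs_inv, abs_norm, div_eq_mul_inv]
  ring

private lemma gram_of_carleson {X H : Type*} [NormedAddCommGroup H] [InnerProductSpace ℂ H]
    (k : X → H) (lam : ℕ → X) :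
    CarlesonCond k lam → GramBdd k lam := by
  rintro ⟨C, hC, h⟩
  refine ⟨C, hC, fun F a => ?_⟩
  set v : H := ∑ i ∈ F, a i • (‖k (lam i)‖⁻¹ • k (lam i)) with hv
  by_cases hv0 : v = 0
  · rw [hv0]
    have : (0:ℝ) ≤ C * ∑ i ∈ F, ‖a i‖ ^ 2 := by positivity
    simpa using this
  have hvpos : (0:ℝ) < ‖v‖ ^ 2 := by
    have := norm_pos_iff.mpr hv0
    positivity
  -- expansion of ⟪v, v⟫
  have e1 : ⟪v, v⟫_ℂ = ∑ i ∈ F, a i * ⟪v, ‖k (lam i)‖⁻¹ • k (lam i)⟫_ℂ := by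
    conv_lhs => rw [hv]
    rw [inner_sum]
    exact Finset.sum_congr rfl fun i _ => inner_smul_right _ _ _
  have e2 : ‖v‖ ^ 2 = ‖⟪v, v⟫_ℂ‖ := by
    rw [inner_self_eq_norm_sq_to_K]
    simp [norm_pow]
  set S : ℝ := ∑ i ∈ F, ‖a i‖ * ‖⟪v, ‖k (lam i)‖⁻¹ • k (lam i)⟫_ℂ‖ with hS
  have hN : ‖v‖ ^ 2 ≤ S := by
    rw [e2, e1]
    refine le_trans (norm_sum_le _ _) ?_
    exact le_of_eq (Finset.sum_congr rfl fun i _ => norm_mul _ _)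
  set T : ℝ := ∑ i ∈ F, ‖⟪v, ‖k (lam i)‖⁻¹ • k (lam i)⟫_ℂ‖ ^ 2 with hT
  set P : ℝ := ∑ i ∈ F, ‖a i‖ ^ 2 with hP
  have hCS : S ^ 2 ≤ P * T := Finset.sum_mul_sq_le_sq_mul_sq F _ _
  have hTC : T ≤ C * ‖v‖ ^ 2 := by
    have := h v F
    refine le_trans (le_of_eq ?_) this
    exact Finset.sum_congr rfl fun i _ => by
      rw [← inner_normalized_sq (k (lam i)) v]
  have hP0 : (0:ℝ) ≤ P := by positivity
  have key : ‖v‖ ^ 2 * ‖v‖ ^ 2 ≤ (C * P) * ‖v‖ ^ 2 := by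
    calc ‖v‖ ^ 2 * ‖v‖ ^ 2 ≤ S * S := by
          exact mul_le_mul hN hN (le_of_lt hvpos) (le_trans (le_of_lt hvpos) hN)
      _ = S ^ 2 := by ring
      _ ≤ P * T := hCS
      _ ≤ P * (C * ‖v‖ ^ 2) := by
          exact mul_le_mul_of_nonneg_left hTC hP0
      _ = (C * P) * ‖v‖ ^ 2 := by ring
  exact le_of_mul_le_mul_right key hvpos

private lemma carleson_of_gram {X H : Type*} [NormedAddCommGroup H] [InnerProductSpace ℂ H]
    (k : X → H) (lam : ℕ → X) :
    GramBdd k lam → CarlesonCond k lam := by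
  rintro ⟨C, hC, h⟩
  refine ⟨C, hC, fun f F => ?_⟩
  set a : ℕ → ℂ := fun i => ⟪‖k (lam i)‖⁻¹ • k (lam i), f⟫_ℂ with ha
  set P : ℝ := ∑ i ∈ F, ‖a i‖ ^ 2 with hP
  have hsum : ∑ i ∈ F, ‖⟪k (lam i), f⟫_ℂ‖ ^ 2 / ‖k (lam i)‖ ^ 2 = P := by
    refine Finset.sum_congr rfl fun i _ => ?_
    rw [← inner_normalized_sq (k (lam i)) f, ← norm_inner_symm]
  rw [hsum]
  set v : H := ∑ i ∈ F, a i • (‖k (lam i)‖⁻¹ • k (lam i)) with hv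
  have e1 : ⟪v, f⟫_ℂ = ((P : ℝ) : ℂ) := by
    rw [hv, sum_inner]
    have : ∀ i ∈ F, ⟪a i • (‖k (lam i)‖⁻¹ • k (lam i)), f⟫_ℂ = ((‖a i‖ ^ 2 : ℝ) : ℂ) := by
      intro i _
      rw [inner_smul_left,
        show ⟪‖k (lam i)‖⁻¹ • k (lam i), f⟫_ℂ = a i from rfl, RCLike.conj_mul]
      norm_cast
    rw [Finset.sum_congr rfl this, hP]
    push_cast
    ring
  have hPle : P ≤ ‖v‖ * ‖f‖ := by
    have h1 : ‖⟪v, f⟫_ℂ‖ = P := by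
      rw [e1, Complex.norm_real]
      exact Real.norm_of_nonneg (by positivity)
    rw [← h1]
    exact norm_inner_le_norm v f
  have hvP : ‖v‖ ^ 2 ≤ C * P := h F a
  rcases eq_or_lt_of_le (show (0:ℝ) ≤ P by positivity) with hP0 | hP0
  · rw [← hP0]
    positivity
  · have key : P * P ≤ (C * ‖f‖ ^ 2) * P := by
      calc P * P ≤ (‖v‖ * ‖f‖) * (‖v‖ * ‖f‖) :=
            mul_le_mul hPle hPle (le_of_lt hP0) (by positivity)
        _ = ‖v‖ ^ 2 * ‖f‖ ^ 2 := by ring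
        _ ≤ (C * P) * ‖f‖ ^ 2 := mul_le_mul_of_nonneg_right hvP (by positivity)
        _ = (C * ‖f‖ ^ 2) * P := by ring
    exact le_of_mul_le_mul_right key hP0

/-- **Lemma 4.5**: if `s` is a normalized complete Pick kernel and `ℓ = g·s` with `g`
positive semidefinite and strictly positive on the diagonal, then (a) boundedness of the
Gram matrix w.r.t. `s` implies boundedness w.r.t. `ℓ`, and the Carleson condition passes
from `H_s` to `H_ℓ`; (b) if the Gram matrix w.r.t. `s` is bounded below, so is the one
w.r.t. `ℓ`. -/
theorem statement10 {X Hs Hl : Type*}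
    [NormedAddCommGroup Hs] [InnerProductSpace ℂ Hs] [CompleteSpace Hs]
    [NormedAddCommGroup Hl] [InnerProductSpace ℂ Hl] [CompleteSpace Hl]
    (s : X → Hs) (hs : ∀ x, s x ≠ 0)
    (hdense_s : Dense ((Submodule.span ℂ (Set.range s) : Submodule ℂ Hs) : Set Hs))
    {K : Type*} [NormedAddCommGroup K] [InnerProductSpace ℂ K] [CompleteSpace K]
    (b : X → K) (z₀ : X) (hb₀ : b z₀ = 0) (hb : ∀ z, ‖b z‖ < 1)
    (hker_s : ∀ z w : X, ⟪s w, s z⟫_ℂ = (1 - ⟪b w, b z⟫_ℂ)⁻¹)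
    (g : X → X → ℂ)
    {M : Type*} [NormedAddCommGroup M] [InnerProductSpace ℂ M] [CompleteSpace M]
    (γ : X → M) (hg : ∀ z w : X, g z w = ⟪γ w, γ z⟫_ℂ)
    (hgdiag : ∀ x, 0 < g x x)
    (l : X → Hl) (hl : ∀ x, l x ≠ 0)
    (hdense_l : Dense ((Submodule.span ℂ (Set.range l) : Submodule ℂ Hl) : Set Hl))
    (hker_l : ∀ z w : X, ⟪l w, l z⟫_ℂ = g z w * ⟪s w, s z⟫_ℂ)
    (lam : ℕ → X) (hinj : Function.Injective lam) :
    ((GramBdd s lam → GramBdd l lam) ∧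
      (CarlesonCond s lam → CarlesonCond l lam)) ∧
    (GramBddBelow s lam → GramBddBelow l lam) := by
  have hγ0 : ∀ x : X, γ x ≠ 0 := by
    intro x hx
    have h0 := hgdiag x
    rw [hg x x, hx, inner_zero_left] at h0
    exact lt_irrefl 0 h0
  have hll : ∀ x y : X, ⟪l x, l y⟫_ℂ = ⟪γ x, γ y⟫_ℂ * ⟪s x, s y⟫_ℂ := fun x y => by
    rw [hker_l y x, hg y x]
  have hnorml : ∀ x : X, ‖l x‖ = ‖γ x‖ * ‖s x‖ := by
    intro x
    have h1 := hll x x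
    simp only [inner_self_eq_norm_sq_to_K] at h1
    have h2 : ‖l x‖ ^ 2 = (‖γ x‖ * ‖s x‖) ^ 2 := by
      have h3 : ‖l x‖ ^ 2 = ‖γ x‖ ^ 2 * ‖s x‖ ^ 2 := by exact_mod_cast h1
      rw [h3]; ring
    calc ‖l x‖ = √(‖l x‖ ^ 2) := (Real.sqrt_sq (norm_nonneg _)).symm
      _ = √((‖γ x‖ * ‖s x‖) ^ 2) := by rw [h2]
      _ = ‖γ x‖ * ‖s x‖ := Real.sqrt_sq (by positivity)
  set sh : ℕ → Hs := fun i => ‖s (lam i)‖⁻¹ • s (lam i) with hsh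
  set lh : ℕ → Hl := fun i => ‖l (lam i)‖⁻¹ • l (lam i) with hlh
  set gh : ℕ → M := fun i => ‖γ (lam i)‖⁻¹ • γ (lam i) with hgh
  have hγ1 : ∀ i, ‖gh i‖ = 1 := by
    intro i
    rw [hgh]
    simp only
    rw [norm_smul, norm_inv, norm_norm, inv_mul_cancel₀ (norm_ne_zero_iff.mpr (hγ0 _))]
  have hmuln : ∀ i j, ⟪lh i, lh j⟫_ℂ = ⟪sh i, sh j⟫_ℂ * ⟪gh i, gh j⟫_ℂ := by
    intro i j
    simp only [hsh, hlh, hgh, RCLike.real_smul_eq_coe_smul (K := ℂ), inner_smul_left,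
      inner_smul_right, RCLike.conj_ofReal]
    rw [hll, hnorml (lam i), hnorml (lam j)]
    push_cast
    rw [mul_inv, mul_inv]
    ring
  have gram_imp : GramBdd s lam → GramBdd l lam := by
    rintro ⟨C, hC, h⟩
    refine ⟨C, hC, fun F a => ?_⟩
    obtain ⟨n, bb, hid, hpar⟩ := main_core sh lh gh hγ1 hmuln F a
    have hgoal : ‖∑ i ∈ F, a i • lh i‖ ^ 2 ≤ C * ∑ i ∈ F, ‖a i‖ ^ 2 := by
      rw [hid]
      calc ∑ k : Fin n, ‖∑ i ∈ F, bb k i • sh i‖ ^ 2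
          ≤ ∑ k : Fin n, C * ∑ i ∈ F, ‖bb k i‖ ^ 2 :=
            Finset.sum_le_sum fun k _ => h F (bb k)
        _ = C * ∑ k : Fin n, ∑ i ∈ F, ‖bb k i‖ ^ 2 := by rw [Finset.mul_sum]
        _ = C * ∑ i ∈ F, ∑ k : Fin n, ‖bb k i‖ ^ 2 := by rw [Finset.sum_comm]
        _ = C * ∑ i ∈ F, ‖a i‖ ^ 2 := by rw [Finset.sum_congr rfl hpar]
    exact hgoal
  have below_imp : GramBddBelow s lam → GramBddBelow l lam := by
    rintro ⟨c, hc, h⟩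
    refine ⟨c, hc, fun F a => ?_⟩
    obtain ⟨n, bb, hid, hpar⟩ := main_core sh lh gh hγ1 hmuln F a
    have hgoal : c * ∑ i ∈ F, ‖a i‖ ^ 2 ≤ ‖∑ i ∈ F, a i • lh i‖ ^ 2 := by
      rw [hid]
      calc c * ∑ i ∈ F, ‖a i‖ ^ 2
          = c * ∑ i ∈ F, ∑ k : Fin n, ‖bb k i‖ ^ 2 := by rw [Finset.sum_congr rfl hpar]
        _ = c * ∑ k : Fin n, ∑ i ∈ F, ‖bb k i‖ ^ 2 := by rw [Finset.sum_comm]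
        _ = ∑ k : Fin n, c * ∑ i ∈ F, ‖bb k i‖ ^ 2 := by rw [Finset.mul_sum]
        _ ≤ ∑ k : Fin n, ‖∑ i ∈ F, bb k i • sh i‖ ^ 2 :=
            Finset.sum_le_sum fun k _ => h F (bb k)
    exact hgoal
  exact ⟨⟨gram_imp, fun hc => carleson_of_gram l lam (gram_imp (gram_of_carleson s lam hc))⟩,
    below_imp⟩
end
end

section
/- Let s be a normalized complete Pick kernel on a set X realized by an RKHS (H_s, s), let g be a positive semidefinite kernel on X with g(x,x) > 0 for all x ∈ X, and let (H_ℓ, ℓ) be an RKHS on X whose kernel satisfies ⟨ℓ_w, ℓ_z⟩ = g(z,w)·⟨s_w, s_z⟩ for all z, w ∈ X. If a sequence (λ_i) of distinct points of X is an interpolating sequence for H_s, then it is an interpolating sequence for H_ℓ. -/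
noncomputable section

open scoped InnerProductSpace ComplexOrder

/-- The sequence `lam` is an interpolating sequence for the RKHS with kernel map `k`:
the map `f ↦ (⟪k (lam i), f⟫ / ‖k (lam i)‖)ᵢ` is bounded from `H` onto `ℓ²`. -/
def InterpSpace {X H : Type*} [NormedAddCommGroup H] [InnerProductSpace ℂ H]
    (k : X → H) (lam : ℕ → X) : Prop :=
  (∃ C > (0 : ℝ), ∀ f : H, ∀ F : Finset ℕ,
      ∑ i ∈ F, ‖⟪k (lam i), f⟫_ℂ‖ ^ 2 / ‖k (lam i)‖ ^ 2 ≤ C * ‖f‖ ^ 2) ∧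
  ∀ a : ℕ → ℂ, Memℓp a 2 →
    ∃ f : H, ∀ i, ⟪k (lam i), f⟫_ℂ / (‖k (lam i)‖ : ℂ) = a i

/-!
Write `k̂ᵢ = k_{λᵢ} / ‖k_{λᵢ}‖` for the normalised kernels. The sequence `(λᵢ)` is interpolating
exactly when `(k̂ᵢ)` is a Riesz sequence: a Bessel bound makes the analysis operator
`A f = (⟪k̂ᵢ, f⟫)ᵢ` bounded, and `A` maps onto `ℓ²` iff its adjoint, the synthesis operator
`c ↦ ∑ cᵢ k̂ᵢ`, is bounded below (open mapping theorem one way, invertibility of the coercive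
operator `A A*` the other way).

The Gram matrix of the normalised `ℓ`-kernels is the Schur product of the Gram matrix of the unit
vectors `uᵢ = γ_{λᵢ} / ‖γ_{λᵢ}‖` with that of the normalised `s`-kernels. Expanding the `uᵢ`
in an orthonormal basis `(eₖ)` of their span writes `‖∑ cᵢ ℓ̂ᵢ‖²` as `∑ₖ ‖∑ cᵢ ⟪eₖ, uᵢ⟫ ŝᵢ‖²`, and
`∑ₖ |cᵢ ⟪eₖ, uᵢ⟫|² = |cᵢ|²`, so both Riesz bounds pass from `s` to `ℓ`.
-/

open scoped lp Matrix ComplexConjugate InnerProduct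

section RieszSequence

variable {H : Type*} [NormedAddCommGroup H] [InnerProductSpace ℂ H]

def BesselBound (v : ℕ → H) (C : ℝ) : Prop :=
  ∀ (f : H) (F : Finset ℕ), ∑ i ∈ F, ‖⟪v i, f⟫_ℂ‖ ^ 2 ≤ C * ‖f‖ ^ 2

def RieszUpperBound (v : ℕ → H) (C : ℝ) : Prop :=
  ∀ (F : Finset ℕ) (c : ℕ → ℂ), ‖∑ i ∈ F, c i • v i‖ ^ 2 ≤ C * ∑ i ∈ F, ‖c i‖ ^ 2

def RieszLowerBound (v : ℕ → H) (δ : ℝ) : Prop :=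
  ∀ (F : Finset ℕ) (c : ℕ → ℂ), δ * ∑ i ∈ F, ‖c i‖ ^ 2 ≤ ‖∑ i ∈ F, c i • v i‖ ^ 2

def Interpolates (v : ℕ → H) : Prop :=
  ∀ a : ℕ → ℂ, Memℓp a 2 → ∃ f : H, ∀ i, ⟪v i, f⟫_ℂ = a i

theorem RieszUpperBound.besselBound {v : ℕ → H} {C : ℝ} (hv : RieszUpperBound v C) :
    BesselBound v C := by
  intro f F
  have hC : 0 ≤ C := (sq_nonneg ‖v 0‖).trans (by simpa using hv {0} 1)
  set S := ∑ i ∈ F, ‖⟪v i, f⟫_ℂ‖ ^ 2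
  set x := ∑ i ∈ F, ⟪v i, f⟫_ℂ • v i
  have hxf : ⟪x, f⟫_ℂ = S := by
    simp only [x, S, sum_inner, inner_smul_left, Complex.conj_mul', Complex.ofReal_sum,
      Complex.ofReal_pow]
  have hS : S ≤ ‖x‖ * ‖f‖ := by
    calc S = ‖⟪x, f⟫_ℂ‖ := by rw [hxf, Complex.norm_real, Real.norm_of_nonneg (by positivity)]
      _ ≤ ‖x‖ * ‖f‖ := norm_inner_le_norm _ _
  have hSS : S * S ≤ C * ‖f‖ ^ 2 * S := by
    calc S * S ≤ (‖x‖ * ‖f‖) ^ 2 := by nlinarith [show 0 ≤ S by positivity]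
      _ = ‖x‖ ^ 2 * ‖f‖ ^ 2 := by ring
      _ ≤ C * S * ‖f‖ ^ 2 := by gcongr; exact hv F _
      _ = C * ‖f‖ ^ 2 * S := by ring
  nlinarith [show 0 ≤ S by positivity, show 0 ≤ C * ‖f‖ ^ 2 by positivity]

theorem BesselBound.exists_analysisCLM {v : ℕ → H} {C : ℝ} (hv : BesselBound v C)
    (hC : 0 ≤ C) : ∃ A : H →L[ℂ] ℓ²(ℕ, ℂ), ‖A‖ ≤ √C ∧ ∀ f i, A f i = ⟪v i, f⟫_ℂ := by
  have hmem : ∀ f : H, Memℓp (fun i => ⟪v i, f⟫_ℂ) 2 := fun f =>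
    memℓp_gen' (C := C * ‖f‖ ^ 2) fun F => by simpa [Real.rpow_two] using hv f F
  let L : H →ₗ[ℂ] ℓ²(ℕ, ℂ) :=
    { toFun f := ⟨_, hmem f⟩
      map_add' f g := lp.ext <| funext fun i => inner_add_right _ _ _
      map_smul' c f := lp.ext <| funext fun i => inner_smul_right _ _ _ }
  have hL : ∀ f, ‖L f‖ ≤ √C * ‖f‖ := fun f =>
    lp.norm_le_of_forall_sum_le (by norm_num) (by positivity) fun F => by
      simpa [Real.rpow_two, mul_pow, Real.sq_sqrt hC, L] using hv f F
  exact ⟨L.mkContinuous _ hL, L.mkContinuous_norm_le (Real.sqrt_nonneg _) hL, fun _ _ => rfl⟩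

theorem interpolates_iff_surjective {v : ℕ → H} {A : H →L[ℂ] ℓ²(ℕ, ℂ)}
    (hA : ∀ f i, A f i = ⟪v i, f⟫_ℂ) : Interpolates v ↔ Function.Surjective A := by
  constructor
  · intro h y
    obtain ⟨f, hf⟩ := h y (lp.memℓp y)
    exact ⟨f, lp.ext <| funext fun i => (hA f i).trans (hf i)⟩
  · intro h a ha
    obtain ⟨f, hf⟩ := h ⟨a, ha⟩
    exact ⟨f, fun i => (hA f i).symm.trans (congrFun (congrArg (⇑) hf) i)⟩

theorem norm_sum_lpSingle_sq (F : Finset ℕ) (c : ℕ → ℂ) :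
    ‖∑ i ∈ F, lp.single 2 i (c i)‖ ^ 2 = ∑ i ∈ F, ‖c i‖ ^ 2 := by
  simpa [Real.rpow_two] using lp.norm_sum_single (p := 2) (by norm_num) c F

variable [CompleteSpace H] {v : ℕ → H} {A : H →L[ℂ] ℓ²(ℕ, ℂ)}

theorem adjoint_sum_lpSingle (hA : ∀ f i, A f i = ⟪v i, f⟫_ℂ) (F : Finset ℕ) (c : ℕ → ℂ) :
    (A†) (∑ i ∈ F, lp.single 2 i (c i)) = ∑ i ∈ F, c i • v i := by
  refine ext_inner_right ℂ fun f => ?_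
  simp only [ContinuousLinearMap.adjoint_inner_left, sum_inner, lp.inner_single_left,
    inner_smul_left, hA, RCLike.inner_apply, mul_comm]

theorem rieszUpperBound_of_norm_le (hA : ∀ f i, A f i = ⟪v i, f⟫_ℂ) {C : ℝ} (hC : 0 ≤ C)
    (hAC : ‖A‖ ≤ √C) : RieszUpperBound v C := by
  intro F c
  rw [← adjoint_sum_lpSingle hA, ← norm_sum_lpSingle_sq]
  set y := ∑ i ∈ F, lp.single 2 i (c i)
  calc ‖(A†) y‖ ^ 2 ≤ (‖(A†)‖ * ‖y‖) ^ 2 := by gcongr; exact (A†).le_opNorm y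
    _ ≤ (√C * ‖y‖) ^ 2 := by rw [LinearIsometryEquiv.norm_map]; gcongr
    _ = C * ‖y‖ ^ 2 := by rw [mul_pow, Real.sq_sqrt hC]

theorem exists_rieszLowerBound_of_surjective (hA : ∀ f i, A f i = ⟪v i, f⟫_ℂ)
    (hsurj : Function.Surjective A) : ∃ δ > 0, RieszLowerBound v δ := by
  obtain ⟨K, hK, hpre⟩ := A.exists_preimage_norm_le hsurj
  refine ⟨(K ^ 2)⁻¹, by positivity, fun F c => ?_⟩
  rw [← adjoint_sum_lpSingle hA, ← norm_sum_lpSingle_sq, inv_mul_le_iff₀ (by positivity)]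
  set y := ∑ i ∈ F, lp.single 2 i (c i)
  obtain ⟨f, hfy, hf⟩ := hpre y
  have hy : ‖y‖ * ‖y‖ ≤ K * ‖(A†) y‖ * ‖y‖ := by
    calc ‖y‖ * ‖y‖ = ‖⟪(A†) y, f⟫_ℂ‖ := by
          rw [ContinuousLinearMap.adjoint_inner_left, hfy, inner_self_eq_norm_sq_to_K]
          simp [sq]
      _ ≤ ‖(A†) y‖ * ‖f‖ := norm_inner_le_norm _ _
      _ ≤ K * ‖(A†) y‖ * ‖y‖ := by nlinarith [norm_nonneg ((A†) y)]
  have : ‖y‖ ≤ K * ‖(A†) y‖ := by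
    nlinarith [norm_nonneg y, mul_nonneg hK.le (norm_nonneg ((A†) y))]
  calc ‖y‖ ^ 2 ≤ (K * ‖(A†) y‖) ^ 2 := by gcongr
    _ = K ^ 2 * ‖(A†) y‖ ^ 2 := mul_pow _ _ _

theorem surjective_of_rieszLowerBound (hA : ∀ f i, A f i = ⟪v i, f⟫_ℂ) {δ : ℝ} (hδ : 0 < δ)
    (hv : RieszLowerBound v δ) : Function.Surjective A := by
  have hlow : ∀ y : ℓ²(ℕ, ℂ), δ * ‖y‖ ^ 2 ≤ ‖(A†) y‖ ^ 2 := by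
    intro y
    have hclosed : IsClosed {y : ℓ²(ℕ, ℂ) | δ * ‖y‖ ^ 2 ≤ ‖(A†) y‖ ^ 2} :=
      isClosed_le (by fun_prop) (by fun_prop)
    refine hclosed.mem_of_tendsto (lp.hasSum_single ENNReal.ofNat_ne_top y)
      (Filter.Eventually.of_forall fun F => ?_)
    simpa only [Set.mem_ofPred_eq, adjoint_sum_lpSingle hA, norm_sum_lpSingle_sq] using hv F y
  have hunit : IsUnit (A ∘L A†) :=
    (A ∘L A†).isUnit_of_forall_le_norm_inner_map (c := ⟨δ, hδ.le⟩) hδ fun y => by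
      rw [ContinuousLinearMap.comp_apply, ← ContinuousLinearMap.adjoint_inner_right,
        inner_self_eq_norm_sq_to_K]
      change ‖y‖ ^ 2 * δ ≤ _
      simpa [mul_comm] using hlow y
  have hsurj := (ContinuousLinearMap.isUnit_iff_bijective.1 hunit).2
  rw [ContinuousLinearMap.coe_comp] at hsurj
  exact hsurj.of_comp

end RieszSequence

section Schur

variable {H M W : Type*} [NormedAddCommGroup H] [InnerProductSpace ℂ H]
  [NormedAddCommGroup M] [InnerProductSpace ℂ M] [NormedAddCommGroup W] [InnerProductSpace ℂ W]

theorem ofReal_norm_sq_sum_smul (F : Finset ℕ) (c : ℕ → ℂ) (x : ℕ → H) :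
    ((‖∑ i ∈ F, c i • x i‖ ^ 2 : ℝ) : ℂ) =
      ∑ i ∈ F, ∑ j ∈ F, conj (c i) * c j * ⟪x i, x j⟫_ℂ := by
  rw [show ((‖∑ i ∈ F, c i • x i‖ ^ 2 : ℝ) : ℂ) = ⟪∑ i ∈ F, c i • x i, ∑ i ∈ F, c i • x i⟫_ℂ by
    simp, sum_inner]
  simp only [inner_sum, inner_smul_left, inner_smul_right, mul_assoc]
  exact Finset.sum_congr rfl fun i _ => Finset.sum_congr rfl fun j _ => mul_left_comm _ _ _

theorem exists_decomposition_of_gram_eq_hadamard (u : ℕ → M) (hu : ∀ i, ‖u i‖ = 1)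
    (v : ℕ → H) (w : ℕ → W) (hw : Matrix.gram ℂ w = Matrix.gram ℂ u ⊙ Matrix.gram ℂ v)
    (F : Finset ℕ) (c : ℕ → ℂ) :
    ∃ (n : ℕ) (d : Fin n → ℕ → ℂ),
      ‖∑ i ∈ F, c i • w i‖ ^ 2 = ∑ k, ‖∑ i ∈ F, d k i • v i‖ ^ 2 ∧
      ∀ i ∈ F, ∑ k, ‖d k i‖ ^ 2 = ‖c i‖ ^ 2 := by
  classical
  let V := Submodule.span ℂ (F.image u : Set M)
  let e := stdOrthonormalBasis ℂ V
  have hV : ∀ i ∈ F, u i ∈ V := fun i hi =>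
    Submodule.subset_span (Finset.mem_coe.2 (Finset.mem_image_of_mem u hi))
  refine ⟨_, fun k i => c i * ⟪(e k : M), u i⟫_ℂ, ?_, fun i hi => ?_⟩
  · apply Complex.ofReal_injective
    rw [Complex.ofReal_sum]
    simp only [ofReal_norm_sq_sum_smul]
    conv_rhs => rw [Finset.sum_comm]
    refine Finset.sum_congr rfl fun i hi => ?_
    conv_rhs => rw [Finset.sum_comm]
    refine Finset.sum_congr rfl fun j hj => ?_
    have hwij : ⟪w i, w j⟫_ℂ = ⟪u i, u j⟫_ℂ * ⟪v i, v j⟫_ℂ := congrFun (congrFun hw i) j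
    have huij : ⟪u i, u j⟫_ℂ = ∑ k, conj ⟪(e k : M), u i⟫_ℂ * ⟪(e k : M), u j⟫_ℂ := by
      simpa only [Submodule.coe_inner, inner_conj_symm] using
        (e.sum_inner_mul_inner ⟨u i, hV i hi⟩ ⟨u j, hV j hj⟩).symm
    rw [hwij, huij, Finset.sum_mul, Finset.mul_sum]
    refine Finset.sum_congr rfl fun k _ => ?_
    rw [map_mul]
    ring
  · simp only [norm_mul, mul_pow, ← Finset.mul_sum]
    rw [show ∑ k, ‖⟪(e k : M), u i⟫_ℂ‖ ^ 2 = ‖u i‖ ^ 2 from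
      e.sum_sq_norm_inner_right ⟨u i, hV i hi⟩, hu i, one_pow, mul_one]

variable {u : ℕ → M} {v : ℕ → H} {w : ℕ → W}

theorem RieszUpperBound.of_gram_eq_hadamard {C : ℝ} (hv : RieszUpperBound v C)
    (hu : ∀ i, ‖u i‖ = 1) (hw : Matrix.gram ℂ w = Matrix.gram ℂ u ⊙ Matrix.gram ℂ v) :
    RieszUpperBound w C := by
  intro F c
  obtain ⟨n, d, hnorm, hd⟩ := exists_decomposition_of_gram_eq_hadamard u hu v w hw F c
  calc ‖∑ i ∈ F, c i • w i‖ ^ 2 = ∑ k, ‖∑ i ∈ F, d k i • v i‖ ^ 2 := hnorm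
    _ ≤ ∑ k, C * ∑ i ∈ F, ‖d k i‖ ^ 2 := Finset.sum_le_sum fun k _ => hv F (d k)
    _ = C * ∑ i ∈ F, ‖c i‖ ^ 2 := by
      rw [← Finset.mul_sum, Finset.sum_comm, Finset.sum_congr rfl hd]

theorem RieszLowerBound.of_gram_eq_hadamard {δ : ℝ} (hv : RieszLowerBound v δ)
    (hu : ∀ i, ‖u i‖ = 1) (hw : Matrix.gram ℂ w = Matrix.gram ℂ u ⊙ Matrix.gram ℂ v) :
    RieszLowerBound w δ := by
  intro F c
  obtain ⟨n, d, hnorm, hd⟩ := exists_decomposition_of_gram_eq_hadamard u hu v w hw F c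
  calc δ * ∑ i ∈ F, ‖c i‖ ^ 2 = ∑ k, δ * ∑ i ∈ F, ‖d k i‖ ^ 2 := by
        rw [← Finset.mul_sum, Finset.sum_comm, Finset.sum_congr rfl hd]
    _ ≤ ∑ k, ‖∑ i ∈ F, d k i • v i‖ ^ 2 := Finset.sum_le_sum fun k _ => hv F (d k)
    _ = ‖∑ i ∈ F, c i • w i‖ ^ 2 := hnorm.symm

end Schur

section NormalizedKernel

variable {X H : Type*} [NormedAddCommGroup H] [InnerProductSpace ℂ H]

def normalizedKernel (k : X → H) (x : X) : H := (‖k x‖ : ℂ)⁻¹ • k x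

theorem inner_normalizedKernel_left (k : X → H) (x : X) (f : H) :
    ⟪normalizedKernel k x, f⟫_ℂ = ⟪k x, f⟫_ℂ / ‖k x‖ := by
  rw [normalizedKernel, inner_smul_left, map_inv₀, Complex.conj_ofReal, div_eq_inv_mul]

theorem inner_normalizedKernel (k : X → H) (x y : X) :
    ⟪normalizedKernel k x, normalizedKernel k y⟫_ℂ = ⟪k x, k y⟫_ℂ / (‖k x‖ * ‖k y‖) := by
  rw [inner_normalizedKernel_left, normalizedKernel, inner_smul_right]
  field_simp

theorem norm_normalizedKernel {k : X → H} {x : X} (hx : k x ≠ 0) :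
    ‖normalizedKernel k x‖ = 1 := by
  rw [normalizedKernel, norm_smul, norm_inv, Complex.norm_real, norm_norm,
    inv_mul_cancel₀ (norm_ne_zero_iff.2 hx)]

theorem gram_normalizedKernel_comp {M W : Type*} [NormedAddCommGroup M] [InnerProductSpace ℂ M]
    [NormedAddCommGroup W] [InnerProductSpace ℂ W] {s : X → H} {γ : X → M} {l : X → W}
    (h : Matrix.gram ℂ l = Matrix.gram ℂ γ ⊙ Matrix.gram ℂ s) {ι : Type*} (lam : ι → X) :
    Matrix.gram ℂ (normalizedKernel l ∘ lam) =
      Matrix.gram ℂ (normalizedKernel γ ∘ lam) ⊙ Matrix.gram ℂ (normalizedKernel s ∘ lam) := by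
  have hker : ∀ x y, ⟪l x, l y⟫_ℂ = ⟪γ x, γ y⟫_ℂ * ⟪s x, s y⟫_ℂ := fun x y =>
    congrFun (congrFun h x) y
  have hnorm : ∀ x, ‖l x‖ = ‖γ x‖ * ‖s x‖ := fun x => by
    have := hker x x
    simp only [inner_self_eq_norm_sq_to_K] at this
    refine (sq_eq_sq₀ (norm_nonneg _) (by positivity)).1 ?_
    rw [mul_pow]
    exact_mod_cast this
  ext i j
  simp only [Matrix.gram_apply, Matrix.hadamard_apply, Function.comp_apply,
    inner_normalizedKernel, hker, hnorm]
  push_cast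
  ring

theorem interpSpace_iff (k : X → H) (lam : ℕ → X) :
    InterpSpace k lam ↔ (∃ C > 0, BesselBound (normalizedKernel k ∘ lam) C) ∧
      Interpolates (normalizedKernel k ∘ lam) := by
  simp only [InterpSpace, BesselBound, Interpolates, Function.comp_apply,
    inner_normalizedKernel_left, norm_div, div_pow, Complex.norm_real, norm_norm]

end NormalizedKernel

theorem statement11_general {X Hs Hl : Type*}
    [NormedAddCommGroup Hs] [InnerProductSpace ℂ Hs] [CompleteSpace Hs]
    [NormedAddCommGroup Hl] [InnerProductSpace ℂ Hl] [CompleteSpace Hl]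
    (s : X → Hs)
    (g : X → X → ℂ)
    {M : Type*} [NormedAddCommGroup M] [InnerProductSpace ℂ M]
    (γ : X → M) (hg : ∀ z w : X, g z w = ⟪γ w, γ z⟫_ℂ)
    (hgdiag : ∀ x, 0 < g x x)
    (l : X → Hl)
    (hker_l : ∀ z w : X, ⟪l w, l z⟫_ℂ = g z w * ⟪s w, s z⟫_ℂ)
    (lam : ℕ → X)
    (hint : InterpSpace s lam) :
    InterpSpace l lam := by
  rw [interpSpace_iff] at hint ⊢
  obtain ⟨⟨C, hC, hbessel_s⟩, hinterp_s⟩ := hint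
  have hunit : ∀ i, ‖normalizedKernel γ (lam i)‖ = 1 := fun i =>
    norm_normalizedKernel fun h => (hgdiag (lam i)).ne' (by rw [hg, h, inner_zero_left])
  have hgram : Matrix.gram ℂ (normalizedKernel l ∘ lam) =
      Matrix.gram ℂ (normalizedKernel γ ∘ lam) ⊙ Matrix.gram ℂ (normalizedKernel s ∘ lam) :=
    gram_normalizedKernel_comp (by ext w z; simp [Matrix.hadamard_apply, hker_l, hg]) lam
  obtain ⟨A, hA_norm, hA⟩ := hbessel_s.exists_analysisCLM hC.le
  obtain ⟨δ, hδ, hlower_s⟩ :=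
    exists_rieszLowerBound_of_surjective hA ((interpolates_iff_surjective hA).1 hinterp_s)
  have hbessel_l : BesselBound (normalizedKernel l ∘ lam) C :=
    ((rieszUpperBound_of_norm_le hA hC.le hA_norm).of_gram_eq_hadamard hunit hgram).besselBound
  obtain ⟨B, -, hB⟩ := hbessel_l.exists_analysisCLM hC.le
  exact ⟨⟨C, hC, hbessel_l⟩, (interpolates_iff_surjective hB).2 <|
    surjective_of_rieszLowerBound hB hδ (hlower_s.of_gram_eq_hadamard hunit hgram)⟩

/-- **Lemma 4.5 (c)**: if `s` is a normalized complete Pick kernel and `ℓ = g·s` with `g`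
positive semidefinite and strictly positive on the diagonal, then every interpolating
sequence for `H_s` is interpolating for `H_ℓ`. -/
theorem statement11 {X Hs Hl : Type*}
    [NormedAddCommGroup Hs] [InnerProductSpace ℂ Hs] [CompleteSpace Hs]
    [NormedAddCommGroup Hl] [InnerProductSpace ℂ Hl] [CompleteSpace Hl]
    (s : X → Hs) (hs : ∀ x, s x ≠ 0)
    (hdense_s : Dense ((Submodule.span ℂ (Set.range s) : Submodule ℂ Hs) : Set Hs))
    {K : Type*} [NormedAddCommGroup K] [InnerProductSpace ℂ K] [CompleteSpace K]
    (b : X → K) (z₀ : X) (hb₀ : b z₀ = 0) (hb : ∀ z, ‖b z‖ < 1)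
    (hker_s : ∀ z w : X, ⟪s w, s z⟫_ℂ = (1 - ⟪b w, b z⟫_ℂ)⁻¹)
    (g : X → X → ℂ)
    {M : Type*} [NormedAddCommGroup M] [InnerProductSpace ℂ M] [CompleteSpace M]
    (γ : X → M) (hg : ∀ z w : X, g z w = ⟪γ w, γ z⟫_ℂ)
    (hgdiag : ∀ x, 0 < g x x)
    (l : X → Hl) (hl : ∀ x, l x ≠ 0)
    (hdense_l : Dense ((Submodule.span ℂ (Set.range l) : Submodule ℂ Hl) : Set Hl))
    (hker_l : ∀ z w : X, ⟪l w, l z⟫_ℂ = g z w * ⟪s w, s z⟫_ℂ)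
    (lam : ℕ → X) (hinj : Function.Injective lam)
    (hint : InterpSpace s lam) :
    InterpSpace l lam :=
  statement11_general s g γ hg hgdiag l hker_l lam hint
end
end

section
/- Let s be a normalized complete Pick kernel on a set X realized by an RKHS (H, s), and let (z_n) be a sequence in X with ‖s_{z_n}‖ → ∞. Then for every z ∈ X, lim_{n→∞} d_H(z_n, z) = 1, where d_H is the kernel pseudometric. -/
/-! In a normalized complete Pick space the kernel function `w ↦ ⟪s_w, s_z⟫ = (1 - ⟪b w, b z⟫)⁻¹`
is bounded on `X` by `(1 - ‖b z‖)⁻¹`, so `|⟪s_{z_n}, s_z⟫| / (‖s_{z_n}‖ ‖s_z‖) → 0` as soon as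
`‖s_{z_n}‖ → ∞`. -/

noncomputable section

open scoped InnerProductSpace ComplexOrder

open Filter Topology

/-- The pseudometric induced by the kernel map `k`. -/
def kernelDist {X H : Type*} [NormedAddCommGroup H] [InnerProductSpace ℂ H]
    (k : X → H) (z w : X) : ℝ :=
  Real.sqrt (1 - ‖⟪k z, k w⟫_ℂ‖ ^ 2 / (‖k z‖ ^ 2 * ‖k w‖ ^ 2))

lemma norm_inv_one_sub_inner_le {𝕜 E : Type*} [RCLike 𝕜] [NormedAddCommGroup E]
    [InnerProductSpace 𝕜 E] {x y : E} (hx : ‖x‖ ≤ 1) (hy : ‖y‖ < 1) :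
    ‖(1 - ⟪x, y⟫_𝕜)⁻¹‖ ≤ (1 - ‖y‖)⁻¹ := by
  rw [norm_inv]
  refine inv_anti₀ (by linarith) ?_
  have hxy : ‖⟪x, y⟫_𝕜‖ ≤ ‖y‖ :=
    (norm_inner_le_norm x y).trans (mul_le_of_le_one_left (norm_nonneg y) hx)
  calc 1 - ‖y‖ ≤ ‖(1 : 𝕜)‖ - ‖⟪x, y⟫_𝕜‖ := by rw [norm_one]; linarith
    _ ≤ ‖1 - ⟪x, y⟫_𝕜‖ := norm_sub_norm_le _ _

lemma tendsto_kernelDist_one_of_norm_tendsto_atTop {X H ι : Type*} [NormedAddCommGroup H]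
    [InnerProductSpace ℂ H] {l : Filter ι} (k : X → H) (z : X) {C : ℝ}
    (hC : ∀ w, ‖⟪k w, k z⟫_ℂ‖ ≤ C) {f : ι → X}
    (hf : Tendsto (fun i => ‖k (f i)‖) l atTop) :
    Tendsto (fun i => kernelDist k (f i) z) l (𝓝 1) := by
  have hratio : Tendsto (fun i => ‖⟪k (f i), k z⟫_ℂ‖ ^ 2 / (‖k (f i)‖ ^ 2 * ‖k z‖ ^ 2))
      l (𝓝 0) := by
    have hbound : Tendsto (fun i => C ^ 2 / ‖k z‖ ^ 2 / ‖k (f i)‖ ^ 2) l (𝓝 0) :=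
      tendsto_const_nhds.div_atTop ((tendsto_pow_atTop two_ne_zero).comp hf)
    refine squeeze_zero (fun i => by positivity) (fun i => ?_) hbound
    rw [mul_comm, ← div_div]
    gcongr
    exact hC (f i)
  simpa [kernelDist] using ((tendsto_const_nhds (x := (1 : ℝ))).sub hratio).sqrt

theorem statement13_general {X H : Type*}
    [NormedAddCommGroup H] [InnerProductSpace ℂ H]
    (s : X → H)
    {K : Type*} [NormedAddCommGroup K] [InnerProductSpace ℂ K]
    (b : X → K) (hb : ∀ z, ‖b z‖ < 1)
    (hker : ∀ z w : X, ⟪s w, s z⟫_ℂ = (1 - ⟪b w, b z⟫_ℂ)⁻¹)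
    (zseq : ℕ → X)
    (htend : Filter.Tendsto (fun n => ‖s (zseq n)‖) Filter.atTop Filter.atTop) :
    ∀ z : X, Filter.Tendsto (fun n => kernelDist s (zseq n) z) Filter.atTop (nhds 1) := by
  intro z
  refine tendsto_kernelDist_one_of_norm_tendsto_atTop s z (C := (1 - ‖b z‖)⁻¹)
    (fun w => ?_) htend
  rw [hker z w]
  exact norm_inv_one_sub_inner_le (hb w).le (hb z)

/-- **Lemma 5.2 (a)**: in a normalized complete Pick space, if `‖s_{z_n}‖ → ∞` then
`d_H(z_n, z) → 1` for every `z ∈ X`. -/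
theorem statement13 {X H : Type*}
    [NormedAddCommGroup H] [InnerProductSpace ℂ H] [CompleteSpace H]
    (s : X → H) (hs : ∀ x, s x ≠ 0)
    (hdense : Dense ((Submodule.span ℂ (Set.range s) : Submodule ℂ H) : Set H))
    {K : Type*} [NormedAddCommGroup K] [InnerProductSpace ℂ K] [CompleteSpace K]
    (b : X → K) (z₀ : X) (hb₀ : b z₀ = 0) (hb : ∀ z, ‖b z‖ < 1)
    (hker : ∀ z w : X, ⟪s w, s z⟫_ℂ = (1 - ⟪b w, b z⟫_ℂ)⁻¹)
    (zseq : ℕ → X)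
    (htend : Filter.Tendsto (fun n => ‖s (zseq n)‖) Filter.atTop Filter.atTop) :
    ∀ z : X, Filter.Tendsto (fun n => kernelDist s (zseq n) z) Filter.atTop (nhds 1) :=
  statement13_general s b hb hker zseq htend
end
end

section
/- Let s be a normalized complete Pick kernel on a set X realized by an RKHS (H, s), and let (z_n) be a sequence in X with ‖s_{z_n}‖ → ∞. If (w_n) is another sequence in X such that there exists r < 1 with d_H(z_n, w_n) < r for all n ∈ ℕ, then lim_{n→∞} ‖s_{w_n}‖ = ∞, where d_H is the kernel pseudometric. -/
noncomputable section

open scoped InnerProductSpace ComplexOrder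

/-- **Lemma 5.2 (b)**: in a normalized complete Pick space, if `‖s_{z_n}‖ → ∞` and `(w_n)`
stays at kernel pseudometric distance at most `r < 1` from `(z_n)`, then `‖s_{w_n}‖ → ∞`. -/
theorem statement14 {X H : Type*}
    [NormedAddCommGroup H] [InnerProductSpace ℂ H] [CompleteSpace H]
    (s : X → H) (hs : ∀ x, s x ≠ 0)
    (hdense : Dense ((Submodule.span ℂ (Set.range s) : Submodule ℂ H) : Set H))
    {K : Type*} [NormedAddCommGroup K] [InnerProductSpace ℂ K] [CompleteSpace K]
    (b : X → K) (z₀ : X) (hb₀ : b z₀ = 0) (hb : ∀ z, ‖b z‖ < 1)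
    (hker : ∀ z w : X, ⟪s w, s z⟫_ℂ = (1 - ⟪b w, b z⟫_ℂ)⁻¹)
    (zseq wseq : ℕ → X)
    (htend : Filter.Tendsto (fun n => ‖s (zseq n)‖) Filter.atTop Filter.atTop)
    (r : ℝ) (hr : r < 1)
    (hd : ∀ n : ℕ, kernelDist s (zseq n) (wseq n) < r) :
    Filter.Tendsto (fun n => ‖s (wseq n)‖) Filter.atTop Filter.atTop := by
  
  -- Abbreviation for the constant
  have hd' : ∀ n, Real.sqrt (1 - ‖⟪s (zseq n), s (wseq n)⟫_ℂ‖ ^ 2 /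
      (‖s (zseq n)‖ ^ 2 * ‖s (wseq n)‖ ^ 2)) < r := hd
  have hr0 : 0 < r := lt_of_le_of_lt (Real.sqrt_nonneg _) (hd' 0)
  have hr2 : 0 ≤ 1 - r ^ 2 := by nlinarith
  set c : ℝ := Real.sqrt (1 - r ^ 2) with hc
  have hcnn : 0 ≤ c := Real.sqrt_nonneg _
  have hc2 : c ^ 2 = 1 - r ^ 2 := Real.sq_sqrt hr2
  -- norm formula : ‖s x‖² = (1 - ‖b x‖²)⁻¹
  have hnorm : ∀ x : X, ‖s x‖ ^ 2 = (1 - ‖b x‖ ^ 2)⁻¹ := by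
    intro x
    have h1 := hker x x
    rw [inner_self_eq_norm_sq_to_K, inner_self_eq_norm_sq_to_K] at h1
    have h2 : ((‖s x‖ ^ 2 : ℝ) : ℂ) = (((1 - ‖b x‖ ^ 2)⁻¹ : ℝ) : ℂ) := by
      push_cast
      exact h1
    exact_mod_cast h2
  have key : ∀ n, c / 2 * ‖s (zseq n)‖ ≤ ‖s (wseq n)‖ := by
    intro n
    set z := zseq n with hzdef
    set w := wseq n with hwdef
    set Z := ‖s z‖ with hZdef
    set W := ‖s w‖ with hWdef
    set I := ‖⟪s z, s w⟫_ℂ‖ with hIdef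
    set t := ‖b w‖ with htdef
    have hZ : 0 < Z := norm_pos_iff.mpr (hs z)
    have hW : 0 < W := norm_pos_iff.mpr (hs w)
    have hInn : 0 ≤ I := norm_nonneg _
    have ht0 : 0 ≤ t := norm_nonneg _
    have ht1 : t < 1 := hb w
    -- step 1 : I² > (1 - r²) Z² W²
    have h1 : (1 - r ^ 2) * (Z ^ 2 * W ^ 2) < I ^ 2 := by
      have := (Real.sqrt_lt' hr0).mp (hd' n)
      have hpos : 0 < Z ^ 2 * W ^ 2 := by positivity
      have : 1 - r ^ 2 < I ^ 2 / (Z ^ 2 * W ^ 2) := by linarith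
      calc (1 - r ^ 2) * (Z ^ 2 * W ^ 2) < I ^ 2 / (Z ^ 2 * W ^ 2) * (Z ^ 2 * W ^ 2) := by
            exact mul_lt_mul_of_pos_right this hpos
        _ = I ^ 2 := div_mul_cancel₀ _ (ne_of_gt hpos)
    -- step 2 : I * (1 - t) ≤ 1
    have h2 : I * (1 - t) ≤ 1 := by
      have hk := hker w z
      have hlow : 1 - t ≤ ‖(1 : ℂ) - ⟪b z, b w⟫_ℂ‖ := by
        have := norm_sub_norm_le (1 : ℂ) (⟪b z, b w⟫_ℂ)
        have hcs := norm_inner_le_norm (𝕜 := ℂ) (b z) (b w)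
        have : 1 - ‖⟪b z, b w⟫_ℂ‖ ≤ ‖(1 : ℂ) - ⟪b z, b w⟫_ℂ‖ := by
          simpa using this
        nlinarith [hb z, ht0]
      have hIeq : I = ‖(1 : ℂ) - ⟪b z, b w⟫_ℂ‖⁻¹ := by
        rw [hIdef, hk, norm_inv]
      rw [hIeq]
      have hpos : 0 < ‖(1 : ℂ) - ⟪b z, b w⟫_ℂ‖ := lt_of_lt_of_le (by linarith) hlow
      rw [inv_mul_le_iff₀ hpos]
      nlinarith
    -- step 3 : W² (1 - t²) = 1
    have ht2 : 0 < 1 - t ^ 2 := by nlinarith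
    have h3 : W ^ 2 * (1 - t ^ 2) = 1 := by
      rw [hWdef, hnorm w, ← htdef, inv_mul_cancel₀ (ne_of_gt ht2)]
    -- I ≤ 2 W²
    have h4 : I ≤ 2 * W ^ 2 := by nlinarith [sq_nonneg (1 - t), sq_nonneg W]
    -- c² Z² < 4 W²
    have hI2 : I ^ 2 ≤ 4 * W ^ 4 := by nlinarith [mul_self_le_mul_self hInn h4]
    have h5 : c ^ 2 * Z ^ 2 < 4 * W ^ 2 := by
      have hW2 : 0 < W ^ 2 := by positivity
      rw [hc2]
      have : (1 - r ^ 2) * Z ^ 2 * W ^ 2 < 4 * W ^ 2 * W ^ 2 := by nlinarith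
      exact lt_of_mul_lt_mul_right this hW2.le
    have h6 : c * Z < 2 * W := by
      refine lt_of_pow_lt_pow_left₀ 2 (by positivity) ?_
      calc (c * Z) ^ 2 = c ^ 2 * Z ^ 2 := by ring
        _ < 4 * W ^ 2 := h5
        _ = (2 * W) ^ 2 := by ring
    linarith
  have hcpos : 0 < c / 2 := by
    have : 0 < 1 - r ^ 2 := by nlinarith
    positivity
  exact Filter.tendsto_atTop_mono key ((htend.const_mul_atTop hcpos))
end
end

section
/- Let (H_s, k^s) and (H_ℓ, k^ℓ) be RKHSs on the open unit disc 𝔻 ⊂ ℂ such that for every f ∈ H_s the function z ↦ z·f̂(z) is induced by a (necessarily unique) element Z_s f ∈ H_s, and for every g ∈ H_ℓ the function z ↦ z·ĝ(z) is induced by an element Z_ℓ g ∈ H_ℓ. Suppose there exists f ∈ H_s whose induced function f̂ is nonzero at some point of 𝔻 ∖ {0}, such that for every g ∈ H_ℓ one has ‖Z_ℓ^n g‖_{H_ℓ} / ‖Z_s^n f‖_{H_s} → 0 as n → ∞. Then no multiplication operator from H_s to H_ℓ is bounded below: for every φ ∈ Mult(H_s, H_ℓ) and every c > 0 there exists h ∈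 H_s with ‖M_φ h‖ < c·‖h‖. In particular, no injective multiplication operator M_φ : H_s → H_ℓ has closed range. -/
noncomputable section

open scoped InnerProductSpace ComplexOrder

/-!
A multiplier `M_φ` intertwines the two shifts, so `M_φ (Z_s^n f) = Z_ℓ^n (M_φ f)`. The vectors
`Z_s^n f` never vanish, since `(Z_s^n f)^(z₀) = z₀^n f̂(z₀) ≠ 0`, and the hypothesis on the growth
of the shifts says exactly that `‖M_φ (Z_s^n f)‖ / ‖Z_s^n f‖ → 0`; hence `M_φ` is not bounded
below. An injective operator between Banach spaces with closed range is bounded below by the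
open mapping theorem, so no injective `M_φ` has closed range.
-/

open Filter Topology

section Kernel

variable {𝕜 X H : Type*} [RCLike 𝕜] [NormedAddCommGroup H] [InnerProductSpace 𝕜 H]

theorem eq_of_forall_inner_kernel_eq {k : X → H}
    (hk : Dense (Submodule.span 𝕜 (Set.range k) : Set H)) {u v : H}
    (h : ∀ x, ⟪k x, u⟫_𝕜 = ⟪k x, v⟫_𝕜) : u = v := by
  refine hk.eq_of_inner_right 𝕜 fun w hw => ?_
  induction hw using Submodule.span_induction with
  | mem w hw => obtain ⟨x, rfl⟩ := hw; exact h x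
  | zero => simp
  | add w w' _ _ hw hw' => rw [inner_add_left, inner_add_left, hw, hw']
  | smul c w _ hw => rw [inner_smul_left, inner_smul_left, hw]

theorem inner_kernel_iterate {k : X → H} {ψ : X → 𝕜} {Z : H → H}
    (hZ : ∀ u x, ⟪k x, Z u⟫_𝕜 = ψ x * ⟪k x, u⟫_𝕜) (n : ℕ) (u : H) (x : X) :
    ⟪k x, Z^[n] u⟫_𝕜 = ψ x ^ n * ⟪k x, u⟫_𝕜 := by
  induction n with
  | zero => simp
  | succ n ih => rw [Function.iterate_succ_apply', hZ, ih, pow_succ, mul_assoc, mul_left_comm]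

theorem iterate_ne_zero_of_inner_kernel_ne_zero {k : X → H} {ψ : X → 𝕜} {Z : H → H}
    (hZ : ∀ u x, ⟪k x, Z u⟫_𝕜 = ψ x * ⟪k x, u⟫_𝕜) {u : H} {x : X} (hψ : ψ x ≠ 0)
    (hu : ⟪k x, u⟫_𝕜 ≠ 0) (n : ℕ) : Z^[n] u ≠ 0 := by
  intro h
  have := inner_kernel_iterate hZ n u x
  rw [h, inner_zero_right] at this
  exact mul_ne_zero (pow_ne_zero n hψ) hu this.symm

end Kernel

namespace IsMultiplier

variable {X Hk Hl : Type*}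
  [NormedAddCommGroup Hk] [InnerProductSpace ℂ Hk] [CompleteSpace Hk]
  [NormedAddCommGroup Hl] [InnerProductSpace ℂ Hl] [CompleteSpace Hl]
  {k : X → Hk} {l : X → Hl} {φ : X → ℂ} {T : Hk →L[ℂ] Hl}

theorem inner_kernel_apply (hT : IsMultiplier k l φ T) (u : Hk) (x : X) :
    ⟪l x, T u⟫_ℂ = φ x * ⟪k x, u⟫_ℂ := by
  rw [← ContinuousLinearMap.adjoint_inner_left, hT x, inner_smul_left, Complex.conj_conj]

theorem semiconj (hT : IsMultiplier k l φ T)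
    (hl : Dense (Submodule.span ℂ (Set.range l) : Set Hl)) {ψ : X → ℂ} {Zk : Hk → Hk}
    {Zl : Hl → Hl} (hZk : ∀ u x, ⟪k x, Zk u⟫_ℂ = ψ x * ⟪k x, u⟫_ℂ)
    (hZl : ∀ v x, ⟪l x, Zl v⟫_ℂ = ψ x * ⟪l x, v⟫_ℂ) :
    Function.Semiconj T Zk Zl := fun u =>
  eq_of_forall_inner_kernel_eq hl fun x => by
    rw [hT.inner_kernel_apply, hZk, hZl, hT.inner_kernel_apply, mul_left_comm]

end IsMultiplier

theorem exists_norm_apply_lt_mul_of_tendsto {ι E F : Type*} [NormedAddCommGroup E] [Norm F]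
    {l : Filter ι} [l.NeBot] {T : E → F} {x : ι → E} (hx : ∀ i, x i ≠ 0)
    (h : Tendsto (fun i => ‖T (x i)‖ / ‖x i‖) l (𝓝 0)) {c : ℝ} (hc : 0 < c) :
    ∃ u, ‖T u‖ < c * ‖u‖ := by
  obtain ⟨i, hi⟩ := (h.eventually (gt_mem_nhds hc)).exists
  exact ⟨x i, (div_lt_iff₀ (norm_pos_iff.mpr (hx i))).mp hi⟩

theorem ContinuousLinearMap.not_isClosed_range_of_forall_exists_norm_apply_lt_mul
    {𝕜 E F : Type*} [NontriviallyNormedField 𝕜]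
    [NormedAddCommGroup E] [NormedSpace 𝕜 E] [CompleteSpace E]
    [NormedAddCommGroup F] [NormedSpace 𝕜 F] [CompleteSpace F]
    (T : E →L[𝕜] F) (hinj : Function.Injective T) (h : ∀ c > (0 : ℝ), ∃ u, ‖T u‖ < c * ‖u‖) :
    ¬ IsClosed (Set.range T) := by
  intro hclosed
  obtain ⟨K, hK⟩ := T.antilipschitz_of_injective_of_isClosed_range hinj hclosed
  obtain ⟨u, hu⟩ := h (K + 1)⁻¹ (by positivity)
  have hK_pos : (0 : ℝ) < K + 1 := by positivity
  have hbound : ‖u‖ ≤ K * ‖T u‖ := T.bound_of_antilipschitz hK u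
  rw [inv_mul_eq_div, lt_div_iff₀ hK_pos] at hu
  nlinarith [norm_nonneg (T u)]

theorem statement18_general {Hs Hl : Type*}
    [NormedAddCommGroup Hs] [InnerProductSpace ℂ Hs] [CompleteSpace Hs]
    [NormedAddCommGroup Hl] [InnerProductSpace ℂ Hl] [CompleteSpace Hl]
    (ks : {z : ℂ // ‖z‖ < 1} → Hs) (kl : {z : ℂ // ‖z‖ < 1} → Hl)
    (hdense_l : Dense ((Submodule.span ℂ (Set.range kl) : Submodule ℂ Hl) : Set Hl))
    (Zs : Hs → Hs)
    (hZs : ∀ (f : Hs) (z : {z : ℂ // ‖z‖ < 1}), ⟪ks z, Zs f⟫_ℂ = (z : ℂ) * ⟪ks z, f⟫_ℂ)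
    (Zl : Hl → Hl)
    (hZl : ∀ (g : Hl) (z : {z : ℂ // ‖z‖ < 1}), ⟪kl z, Zl g⟫_ℂ = (z : ℂ) * ⟪kl z, g⟫_ℂ)
    (f : Hs) (hf : ∃ z : {z : ℂ // ‖z‖ < 1}, (z : ℂ) ≠ 0 ∧ ⟪ks z, f⟫_ℂ ≠ 0)
    (hlim : ∀ g : Hl,
      Filter.Tendsto (fun n => ‖Zl^[n] g‖ / ‖Zs^[n] f‖) Filter.atTop (nhds 0)) :
    (∀ (φ : {z : ℂ // ‖z‖ < 1} → ℂ) (T : Hs →L[ℂ] Hl), IsMultiplier ks kl φ T →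
      ∀ c > (0 : ℝ), ∃ h : Hs, ‖T h‖ < c * ‖h‖) ∧
    (∀ (φ : {z : ℂ // ‖z‖ < 1} → ℂ) (T : Hs →L[ℂ] Hl), IsMultiplier ks kl φ T →
      Function.Injective T → ¬ IsClosed (Set.range T)) := by
  obtain ⟨z, hz, hfz⟩ := hf
  have not_bounded_below : ∀ (φ : {z : ℂ // ‖z‖ < 1} → ℂ) (T : Hs →L[ℂ] Hl),
      IsMultiplier ks kl φ T → ∀ c > (0 : ℝ), ∃ h : Hs, ‖T h‖ < c * ‖h‖ := by
    intro φ T hT c hc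
    have hcomm : ∀ n, T (Zs^[n] f) = Zl^[n] (T f) :=
      fun n => (hT.semiconj hdense_l hZs hZl).iterate_right n f
    refine exists_norm_apply_lt_mul_of_tendsto (l := atTop)
      (iterate_ne_zero_of_inner_kernel_ne_zero hZs hz hfz) ?_ hc
    simpa only [hcomm] using hlim (T f)
  exact ⟨not_bounded_below, fun φ T hT hinj =>
    T.not_isClosed_range_of_forall_exists_norm_apply_lt_mul hinj (not_bounded_below φ T hT)⟩

/-- If `H_s`, `H_ℓ` are RKHSs on the unit disc invariant under multiplication by `z`, and
there is `f ∈ H_s`, not identically zero off the origin, with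
`‖z^n g‖_{H_ℓ} / ‖z^n f‖_{H_s} → 0` for every `g ∈ H_ℓ`, then no multiplication operator
`M_φ : H_s → H_ℓ` is bounded below; in particular no injective `M_φ` has closed range. -/
theorem statement18 {Hs Hl : Type*}
    [NormedAddCommGroup Hs] [InnerProductSpace ℂ Hs] [CompleteSpace Hs]
    [NormedAddCommGroup Hl] [InnerProductSpace ℂ Hl] [CompleteSpace Hl]
    (ks : {z : ℂ // ‖z‖ < 1} → Hs) (kl : {z : ℂ // ‖z‖ < 1} → Hl)
    (hks : ∀ x, ks x ≠ 0) (hkl : ∀ x, kl x ≠ 0)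
    (hdense_s : Dense ((Submodule.span ℂ (Set.range ks) : Submodule ℂ Hs) : Set Hs))
    (hdense_l : Dense ((Submodule.span ℂ (Set.range kl) : Submodule ℂ Hl) : Set Hl))
    (Zs : Hs → Hs)
    (hZs : ∀ (f : Hs) (z : {z : ℂ // ‖z‖ < 1}), ⟪ks z, Zs f⟫_ℂ = (z : ℂ) * ⟪ks z, f⟫_ℂ)
    (Zl : Hl → Hl)
    (hZl : ∀ (g : Hl) (z : {z : ℂ // ‖z‖ < 1}), ⟪kl z, Zl g⟫_ℂ = (z : ℂ) * ⟪kl z, g⟫_ℂ)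
    (f : Hs) (hf : ∃ z : {z : ℂ // ‖z‖ < 1}, (z : ℂ) ≠ 0 ∧ ⟪ks z, f⟫_ℂ ≠ 0)
    (hlim : ∀ g : Hl,
      Filter.Tendsto (fun n => ‖Zl^[n] g‖ / ‖Zs^[n] f‖) Filter.atTop (nhds 0)) :
    (∀ (φ : {z : ℂ // ‖z‖ < 1} → ℂ) (T : Hs →L[ℂ] Hl), IsMultiplier ks kl φ T →
      ∀ c > (0 : ℝ), ∃ h : Hs, ‖T h‖ < c * ‖h‖) ∧
    (∀ (φ : {z : ℂ // ‖z‖ < 1} → ℂ) (T : Hs →L[ℂ] Hl), IsMultiplier ks kl φ T →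
      Function.Injective T → ¬ IsClosed (Set.range T)) :=
  statement18_general ks kl hdense_l Zs hZs Zl hZl f hf hlim
end
end
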